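/- arXiv:cs/0610027 — 9 statements merged into one kernel-verified Lean document; each statement's English description precedes it below -/
import Mathlib

section
/- Weak games are positionally determined: for every position p of a weak game, exactly one of the players has a winning strategy from p, and the winning player has a positional (memoryless) winning strategy from p. -/
def prefixIn {S : Type} (τ : Set (List S)) (f : ℕ → S) : Prop :=
  ∀ k : ℕ, (List.ofFn fun i : Fin (k + 1) => f i) ∈ τ

/-- A two-player game on a graph: positions of player 1 are those satisfying `own1`,
positions of player 2 the others; `rank` is used for the weak winning condition. -/
structure Game (S : Type) where
  succ : S → S → Prop
  own1 : S → Prop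
  rank : S → ℕ

namespace Game

variable {S : Type}

def IsPlay (G : Game S) (π : List S) : Prop := π ≠ [] ∧ π.Chain' G.succ

def Terminal (G : Game S) (p : S) : Prop := ∀ q, ¬ G.succ p q

/-- Does player `l` (`true` = player 1, `false` = player 2) own position `p`? -/
def Owns (G : Game S) (l : Bool) (p : S) : Prop := if l then G.own1 p else ¬ G.own1 p

/-- A strategy for player `l` from `p`, represented as its tree of finite plays. -/
def IsStrategy (G : Game S) (l : Bool) (p : S) (τ : Set (List S)) : Prop :=
  [p] ∈ τ ∧
  (∀ π ∈ τ, G.IsPlay π ∧ π.head? = some p) ∧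
  (∀ π ∈ τ, π ≠ [p] → π.dropLast ∈ τ) ∧
  (∀ π ∈ τ, ∀ q, π.getLast? = some q → G.Owns l q → (∃ q', G.succ q q') →
    ∃! q', G.succ q q' ∧ π ++ [q'] ∈ τ) ∧
  (∀ π ∈ τ, ∀ q, π.getLast? = some q → ¬ G.Owns l q → ∀ q', G.succ q q' → π ++ [q'] ∈ τ)

/-- A strategy is positional if the chosen successor depends only on the current position. -/
def Positional (G : Game S) (l : Bool) (τ : Set (List S)) : Prop :=
  ∀ π₁ π₂ q q₁ q₂, π₁ ∈ τ → π₂ ∈ τ →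
    π₁.getLast? = some q → π₂.getLast? = some q → G.Owns l q →
    π₁ ++ [q₁] ∈ τ → π₂ ++ [q₂] ∈ τ → q₁ = q₂

/-- An infinite play is winning for player `l` iff its eventually-constant rank has the
right parity (even for player 1, odd for player 2). -/
def InfWin (G : Game S) (l : Bool) (f : ℕ → S) : Prop :=
  ∃ N, (∀ j, N ≤ j → G.rank (f j) = G.rank (f N)) ∧
    G.rank (f N) % 2 = (if l then 0 else 1)

/-- A winning strategy: every complete finite play following it ends in an opponent
position, and every infinite play following it has the right limit-rank parity. -/
def IsWinningStrategy (G : Game S) (l : Bool) (p : S) (τ : Set (List S)) : Prop :=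
  G.IsStrategy l p τ ∧
  (∀ π ∈ τ, ∀ q, π.getLast? = some q → G.Terminal q → ¬ G.Owns l q) ∧
  (∀ f : ℕ → S, prefixIn τ f → G.InfWin l f)

end Game

/-- A weak game: finitely branching, with ranks non-increasing along edges. -/
structure WeakGame (S : Type) extends Game S where
  finBranch : ∀ p, {q | succ p q}.Finite
  rank_mono : ∀ p q, succ p q → rank q ≤ rank p

/-!
By recursion on the rank, every position gets a winner. In the layer of rank `n`, let `a` be
the player who loses the infinite plays that stay at rank `n`. Player `a` wins exactly the
attractor, inside the layer, of the lower positions he wins (dead ends of his opponent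
included); his opponent wins the rest of the layer, since from there he can keep the play
out of that attractor forever. Finite branching makes every position of the attractor enter
it at a finite level, so both players have positional strategies: `a` lowers the level, his
opponent stays outside the attractor. Along a play following them the winner never changes,
the rank eventually stabilises, and it cannot stabilise with the wrong parity because the
level would then decrease forever.

Two winning strategies of opposite players from the same position would have a common
complete play, which cannot be won by both.
-/

open Classical

namespace Game

variable {S : Type}

section

variable (G : Game S)

theorem owns_not (l : Bool) (p : S) : G.Owns (!l) p ↔ ¬ G.Owns l p := by
  cases l <;> simp [Owns]

/-- The player who wins the infinite plays of eventual rank `n` (`true` is player 1). -/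
def parityWinner (n : ℕ) : Bool := decide (n % 2 = 0)

theorem mod_two_eq_iff_parityWinner_eq (n : ℕ) (l : Bool) :
    n % 2 = (if l then 0 else 1) ↔ parityWinner n = l := by
  rcases Nat.mod_two_eq_zero_or_one n with h | h <;> cases l <;> simp [parityWinner, h]

theorem infWin_of_rank_eventually_eq {l : Bool} {f : ℕ → S} {N : ℕ}
    (hN : ∀ j, N ≤ j → G.rank (f j) = G.rank (f N)) (hl : parityWinner (G.rank (f N)) = l) :
    G.InfWin l f :=
  ⟨N, hN, (mod_two_eq_iff_parityWinner_eq _ l).2 hl⟩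

end

section

variable (G : Game S)

def Follows (l : Bool) (σ : S → S) (a b : S) : Prop := G.succ a b ∧ (G.Owns l a → b = σ a)

def followTree (l : Bool) (σ : S → S) (p : S) : Set (List S) :=
  {π | π.head? = some p ∧ π.IsChain (G.Follows l σ)}

variable {G} {l : Bool} {σ : S → S} {p : S}

theorem append_mem_followTree_iff {π : List S} {q q' : S} (hπ : π ∈ G.followTree l σ p)
    (hq : π.getLast? = some q) : π ++ [q'] ∈ G.followTree l σ p ↔ G.Follows l σ q q' := by
  have hne : π ≠ [] := by rintro rfl; simp at hq
  simp [followTree, List.head?_append_of_ne_nil _ hne, hπ.1, List.isChain_append, hπ.2, hq]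

theorem isStrategy_followTree
    (hσ : ∀ q, G.Owns l q → (∃ q', G.succ q q') → G.succ q (σ q)) :
    G.IsStrategy l p (G.followTree l σ p) := by
  have ne_nil : ∀ π ∈ G.followTree l σ p, π ≠ [] := by
    rintro _ hπ rfl
    exact absurd hπ.1 (by simp)
  refine ⟨⟨rfl, List.isChain_singleton p⟩,
    fun π hπ => ⟨⟨ne_nil π hπ, hπ.2.imp fun _ _ h => h.1⟩, hπ.1⟩,
    fun π hπ hne => ⟨?_, hπ.2.dropLast⟩, fun π hπ q hq hown hT => ?_,
    fun π hπ q hq hown q' hq' =>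
      (append_mem_followTree_iff hπ hq).2 ⟨hq', fun h => absurd h hown⟩⟩
  · obtain ⟨x, xs, rfl⟩ := List.exists_cons_of_ne_nil (ne_nil π hπ)
    obtain rfl : x = p := by simpa using hπ.1
    have hxs : xs ≠ [] := by rintro rfl; exact hne rfl
    simp [List.dropLast_cons_of_ne_nil hxs]
  · have hsucc := hσ q hown hT
    refine ⟨σ q, ⟨hsucc, (append_mem_followTree_iff hπ hq).2 ⟨hsucc, fun _ => rfl⟩⟩,
      fun q' h => ((append_mem_followTree_iff hπ hq).1 h.2).2 hown⟩

theorem positional_followTree : G.Positional l (G.followTree l σ p) :=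
  fun _ _ _ _ _ h₁ h₂ hl₁ hl₂ hown he₁ he₂ => by
    rw [((append_mem_followTree_iff h₁ hl₁).1 he₁).2 hown,
      ((append_mem_followTree_iff h₂ hl₂).1 he₂).2 hown]

theorem mem_of_mem_followTree {I : Set S} (hI : ∀ a b, a ∈ I → G.Follows l σ a b → b ∈ I)
    (hp : p ∈ I) {π : List S} (hπ : π ∈ G.followTree l σ p) {q : S} (hq : q ∈ π) :
    q ∈ I := by
  refine hπ.2.induction (· ∈ I) π (fun a b h ha => hI a b ha h) (fun hne => ?_) q hq
  rwa [Option.some_injective _ ((List.head?_eq_some_head hne).symm.trans hπ.1)]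

theorem follows_of_prefixIn {f : ℕ → S} (hf : prefixIn (G.followTree l σ p) f) :
    f 0 = p ∧ ∀ j, G.Follows l σ (f j) (f (j + 1)) := by
  refine ⟨by simpa using (hf 0).1, fun j => ?_⟩
  simpa using List.isChain_ofFn.1 (hf (j + 1)).2 j (by omega)

end

section

theorem exists_prefixIn {τ : Set (List S)} {p : S} (hp : [p] ∈ τ)
    (hext : ∀ π ∈ τ, ∃ x, π ++ [x] ∈ τ) : ∃ f : ℕ → S, prefixIn τ f := by
  have : Nonempty S := ⟨p⟩
  choose! x hx using hext
  let g : ℕ → List S := fun k => (fun π => π ++ [x π])^[k] [p]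
  have hg_succ : ∀ k, g (k + 1) = g k ++ [x (g k)] := fun k => Function.iterate_succ_apply' ..
  have hg_mem : ∀ k, g k ∈ τ := by
    intro k
    induction k with
    | zero => exact hp
    | succ k ih => exact hg_succ k ▸ hx _ ih
  have hg : ∀ k, g k = List.ofFn fun i : Fin (k + 1) => ((g i).getLast?).getD p := by
    intro k
    induction k with
    | zero => rfl
    | succ k ih =>
      rw [hg_succ, List.ofFn_succ', List.concat_eq_append]
      simp only [Fin.val_castSucc, Fin.val_last, ← ih, hg_succ, List.getLast?_concat,
        Option.getD_some]
  exact ⟨fun k => ((g k).getLast?).getD p, fun k => hg k ▸ hg_mem k⟩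

variable {G : Game S} {l : Bool} {p : S} {τ τ' : Set (List S)}

theorem InfWin.eq {l' : Bool} {f : ℕ → S} (h : G.InfWin l f)
    (h' : G.InfWin l' f) : l = l' := by
  obtain ⟨N, hN, hl⟩ := h
  obtain ⟨N', hN', hl'⟩ := h'
  rw [mod_two_eq_iff_parityWinner_eq] at hl hl'
  rw [← hl, ← hl', ← hN (max N N') (le_max_left _ _), ← hN' (max N N') (le_max_right _ _)]

theorem IsWinningStrategy.exists_append_mem_inter (h : G.IsWinningStrategy l p τ)
    (h' : G.IsWinningStrategy (!l) p τ') :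
    ∀ π ∈ τ ∩ τ', ∃ x, π ++ [x] ∈ τ ∩ τ' := by
  obtain ⟨⟨-, plays, -, own, opp⟩, stuck, -⟩ := h
  obtain ⟨⟨-, -, -, own', opp'⟩, stuck', -⟩ := h'
  rintro π ⟨hπ, hπ'⟩
  obtain ⟨q, hq⟩ :=
    Option.ne_none_iff_exists'.1 (List.getLast?_eq_none_iff.not.2 (plays π hπ).1.1)
  by_cases hT : G.Terminal q
  · exact ((owns_not G l q).not.1 (stuck' π hπ' q hq hT) (stuck π hπ q hq hT)).elim
  have hmove : ∃ q', G.succ q q' := by simpa [Terminal] using hT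
  by_cases hown : G.Owns l q
  · obtain ⟨q', ⟨hqq', hmem⟩, -⟩ := own π hπ q hq hown hmove
    exact ⟨q', hmem, opp' π hπ' q hq ((owns_not G l q).not.2 (not_not.2 hown)) q' hqq'⟩
  · obtain ⟨q', ⟨hqq', hmem⟩, -⟩ := own' π hπ' q hq ((owns_not G l q).2 hown) hmove
    exact ⟨q', opp π hπ q hq hown q' hqq', hmem⟩

theorem IsWinningStrategy.eq {l' : Bool} (h : G.IsWinningStrategy l p τ)
    (h' : G.IsWinningStrategy l' p τ') : l = l' := by
  by_contra hne
  obtain rfl := Bool.eq_not_of_ne (Ne.symm hne)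
  obtain ⟨f, hf⟩ :=
    exists_prefixIn (τ := τ ∩ τ') ⟨h.1.1, h'.1.1⟩ (h.exists_append_mem_inter h')
  exact hne ((h.2.2 f fun k => (hf k).1).eq (h'.2.2 f fun k => (hf k).2))

end

section

variable (G : Game S)

/-- The positions from which player `a` can force, within `k` moves and through positions
of rank `n` only, a visit to `T` or to a dead end of his opponent. -/
def layerAttr (a : Bool) (n : ℕ) (T : Set S) : ℕ → Set S
  | 0 => T
  | k + 1 => layerAttr a n T k ∪ {p | G.rank p = n ∧
      ((G.Owns a p ∧ ∃ q, G.succ p q ∧ q ∈ layerAttr a n T k) ∨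
        (¬ G.Owns a p ∧ ∀ q, G.succ p q → q ∈ layerAttr a n T k))}

def attractor (a : Bool) (n : ℕ) (T : Set S) : Set S := ⋃ k, G.layerAttr a n T k

noncomputable def attrDepth (a : Bool) (n : ℕ) (T : Set S) (p : S) : ℕ :=
  if h : ∃ k, p ∈ G.layerAttr a n T k then Nat.find h else 0

variable {G} {a : Bool} {n : ℕ} {T : Set S}

theorem layerAttr_mono : Monotone (G.layerAttr a n T) :=
  monotone_nat_of_le_succ fun _ _ hp => Or.inl hp

theorem mem_attractor {p : S} : p ∈ G.attractor a n T ↔ ∃ k, p ∈ G.layerAttr a n T k :=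
  Set.mem_iUnion

theorem mem_of_mem_layerAttr_of_rank_ne {p : S} {k : ℕ} (hp : p ∈ G.layerAttr a n T k)
    (hn : G.rank p ≠ n) : p ∈ T := by
  induction k with
  | zero => exact hp
  | succ k ih => exact hp.elim ih fun h => absurd h.1 hn

theorem mem_attractor_of_owns {p q : S} (hn : G.rank p = n) (ha : G.Owns a p)
    (hpq : G.succ p q) (hq : q ∈ G.attractor a n T) : p ∈ G.attractor a n T := by
  obtain ⟨k, hk⟩ := mem_attractor.1 hq
  exact mem_attractor.2 ⟨k + 1, Or.inr ⟨hn, Or.inl ⟨ha, q, hpq, hk⟩⟩⟩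

/-- Finite branching bounds the number of steps needed from all successors at once. -/
theorem mem_attractor_of_forall {p : S} (hfin : {q | G.succ p q}.Finite) (hn : G.rank p = n)
    (ha : ¬ G.Owns a p) (hq : ∀ q, G.succ p q → q ∈ G.attractor a n T) :
    p ∈ G.attractor a n T := by
  choose! K hK using fun q hpq => mem_attractor.1 (hq q hpq)
  obtain ⟨k, hk⟩ := (hfin.image K).bddAbove
  refine mem_attractor.2 ⟨k + 1, Or.inr ⟨hn, Or.inr ⟨ha, fun q hpq => ?_⟩⟩⟩
  exact layerAttr_mono (hk ⟨q, hpq, rfl⟩) (hK q hpq)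

theorem mem_layerAttr_attrDepth {p : S} (hp : p ∈ G.attractor a n T) :
    p ∈ G.layerAttr a n T (G.attrDepth a n T p) := by
  rw [mem_attractor] at hp
  rw [attrDepth, dif_pos hp]
  exact Nat.find_spec hp

theorem attrDepth_le {p : S} {k : ℕ} (hp : p ∈ G.layerAttr a n T k) :
    G.attrDepth a n T p ≤ k := by
  rw [attrDepth, dif_pos ⟨k, hp⟩]
  exact Nat.find_min' _ hp

end

section

variable (G : Game S)

/-- In the layer of rank `n`, the player who loses the infinite plays of rank `n` wins
exactly the positions from which he can force a visit to a lower position he wins. The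
binder `∃ _ : G.rank q < G.rank p` makes the recursion visibly well founded. -/
noncomputable def winner (p : S) : Bool :=
  if p ∈ G.attractor (!parityWinner (G.rank p)) (G.rank p)
      {q | ∃ _ : G.rank q < G.rank p, winner q = !parityWinner (G.rank p)}
  then !parityWinner (G.rank p) else parityWinner (G.rank p)
termination_by G.rank p

def lowerWins (n : ℕ) : Set S := {q | G.rank q < n ∧ G.winner q = !parityWinner n}

def escapeRegion (n : ℕ) : Set S := G.attractor (!parityWinner n) n (G.lowerWins n)

theorem winner_eq (p : S) : G.winner p =
    if p ∈ G.escapeRegion (G.rank p) then !parityWinner (G.rank p)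
    else parityWinner (G.rank p) := by
  rw [winner]
  simp only [exists_prop]
  rfl

variable {G}

theorem mem_escapeRegion_iff {q : S} {n : ℕ} (hq : G.rank q ≤ n) :
    q ∈ G.escapeRegion n ↔ G.winner q = !parityWinner n := by
  rcases hq.lt_or_eq with hlt | rfl
  · constructor
    · intro h
      obtain ⟨k, hk⟩ := mem_attractor.1 h
      exact (mem_of_mem_layerAttr_of_rank_ne hk hlt.ne).2
    · exact fun h => mem_attractor.2 ⟨0, hlt, h⟩
  · rw [winner_eq]
    split_ifs with h <;> simp [h]

theorem not_owns_winner_of_terminal {p : S} (hT : G.Terminal p) : ¬ G.Owns (G.winner p) p := by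
  rw [winner_eq]
  split_ifs with h
  · obtain ⟨k, hk⟩ := mem_attractor.1 h
    induction k with
    | zero => exact absurd hk.1 (lt_irrefl _)
    | succ k ih =>
      rcases hk with hk | ⟨-, ⟨-, q, hpq, -⟩ | ⟨hown, -⟩⟩
      exacts [ih hk, absurd hpq (hT q), hown]
  · intro hown
    refine h (mem_attractor.2
      ⟨1, Or.inr ⟨rfl, Or.inr ⟨?_, fun q hpq => absurd hpq (hT q)⟩⟩⟩)
    rwa [owns_not, not_not]

end

section

variable (G : Game S)

noncomputable def winDepth (p : S) : ℕ :=
  G.attrDepth (!parityWinner (G.rank p)) (G.rank p) (G.lowerWins (G.rank p)) p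

def GoodMove (p q : S) : Prop :=
  G.succ p q ∧ G.winner q = G.winner p ∧
    (G.winner p ≠ parityWinner (G.rank p) →
      G.rank q < G.rank p ∨ G.rank q = G.rank p ∧ G.winDepth q < G.winDepth p)

noncomputable def goodChoice (p : S) : S :=
  if h : ∃ q, G.GoodMove p q then h.choose else p

variable {G} in
theorem goodMove_goodChoice {p : S} (h : ∃ q, G.GoodMove p q) :
    G.GoodMove p (G.goodChoice p) := by
  rw [goodChoice, dif_pos h]
  exact h.choose_spec

end

end Game

namespace WeakGame

open Game

variable {S : Type} {G : WeakGame S}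

theorem goodMove_of_mem_layerAttr {p q : S} {k : ℕ} (hpq : G.succ p q)
    (hw : G.winner p = !parityWinner (G.rank p))
    (hq : q ∈ G.layerAttr (!parityWinner (G.rank p)) (G.rank p) (G.lowerWins (G.rank p)) k)
    (hk : k < G.winDepth p) : G.GoodMove p q := by
  have hrank := G.rank_mono p q hpq
  refine ⟨hpq, ?_, fun _ => ?_⟩
  · rw [hw, ← mem_escapeRegion_iff hrank]
    exact mem_attractor.2 ⟨k, hq⟩
  · rcases hrank.lt_or_eq with hlt | heq
    · exact Or.inl hlt
    · refine Or.inr ⟨heq, ?_⟩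
      rw [winDepth, heq]
      exact (attrDepth_le hq).trans_lt hk

/-- Where the winner loses the infinite plays of the current rank, he plays the attractor
strategy towards a lower position he wins. -/
theorem goodMove_of_winner_ne_parity {p : S} (hw : G.winner p ≠ parityWinner (G.rank p)) :
    (G.Owns (G.winner p) p → ∃ q, G.GoodMove p q) ∧
      (¬ G.Owns (G.winner p) p → ∀ q, G.succ p q → G.GoodMove p q) := by
  have hw' := Bool.eq_not_of_ne hw
  have hp := mem_layerAttr_attrDepth ((mem_escapeRegion_iff le_rfl).2 hw')
  obtain ⟨k, hk⟩ : ∃ k, G.winDepth p = k + 1 := by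
    refine Nat.exists_eq_add_one.2 (Nat.pos_of_ne_zero fun h0 => ?_)
    rw [← winDepth, h0] at hp
    exact lt_irrefl _ hp.1
  rw [← winDepth, hk] at hp
  rw [hw']
  rcases hp with hp | ⟨-, ⟨hown, q, hpq, hq⟩ | ⟨hown, hq⟩⟩
  · have := attrDepth_le hp
    rw [← winDepth] at this
    omega
  · exact ⟨fun _ => ⟨q, goodMove_of_mem_layerAttr hpq hw' hq (by omega)⟩,
      fun hown' => absurd hown hown'⟩
  · exact ⟨fun hown' => absurd hown' hown,
      fun _ q hpq => goodMove_of_mem_layerAttr hpq hw' (hq q hpq) (by omega)⟩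

/-- Where the winner wins the infinite plays of the current rank, he only has to avoid
the escape region of his opponent. -/
theorem goodMove_of_winner_eq_parity {p : S} (hw : G.winner p = parityWinner (G.rank p)) :
    (G.Owns (G.winner p) p → ∃ q, G.GoodMove p q) ∧
      (¬ G.Owns (G.winner p) p → ∀ q, G.succ p q → G.GoodMove p q) := by
  have hp : p ∉ G.escapeRegion (G.rank p) := by
    rw [mem_escapeRegion_iff le_rfl, hw]
    exact Bool.eq_not_self _ |>.not.2 id
  have good_iff : ∀ q, G.succ p q → (G.GoodMove p q ↔ q ∉ G.escapeRegion (G.rank p)) := by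
    intro q hpq
    rw [mem_escapeRegion_iff (G.rank_mono p q hpq), Bool.eq_not, not_not]
    simp [GoodMove, hpq, hw]
  rw [hw]
  constructor
  · intro hown
    by_contra! hnone
    refine hp (mem_attractor_of_forall (G.finBranch p) rfl ?_ fun q hpq => ?_)
    · rwa [owns_not, not_not]
    · by_contra hq
      exact hnone q ((good_iff q hpq).2 hq)
  · intro hown q hpq
    refine (good_iff q hpq).2 fun hq => hp (mem_attractor_of_owns rfl ?_ hpq hq)
    rwa [owns_not]

theorem exists_goodMove_of_owns {p : S} (h : G.Owns (G.winner p) p) : ∃ q, G.GoodMove p q := by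
  by_cases hw : G.winner p = parityWinner (G.rank p)
  exacts [(goodMove_of_winner_eq_parity hw).1 h, (goodMove_of_winner_ne_parity hw).1 h]

theorem goodMove_of_not_owns {p q : S} (h : ¬ G.Owns (G.winner p) p) (hpq : G.succ p q) :
    G.GoodMove p q := by
  by_cases hw : G.winner p = parityWinner (G.rank p)
  exacts [(goodMove_of_winner_eq_parity hw).2 h q hpq, (goodMove_of_winner_ne_parity hw).2 h q hpq]

theorem succ_goodChoice {p : S} (h : ∃ q, G.succ p q) : G.succ p (G.goodChoice p) := by
  have : ∃ q, G.GoodMove p q := by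
    by_cases hown : G.Owns (G.winner p) p
    · exact exists_goodMove_of_owns hown
    · obtain ⟨q, hpq⟩ := h
      exact ⟨q, goodMove_of_not_owns hown hpq⟩
  exact (goodMove_goodChoice this).1

theorem goodMove_of_follows {l : Bool} {a b : S} (hw : G.winner a = l)
    (h : G.Follows l G.goodChoice a b) : G.GoodMove a b := by
  subst hw
  by_cases hown : G.Owns (G.winner a) a
  · rw [h.2 hown]
    exact goodMove_goodChoice (exists_goodMove_of_owns hown)
  · exact goodMove_of_not_owns hown h.1

/-- The ranks along the play stabilise; if their limit parity did not favour the winner, the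
depth in the escape attractor would decrease forever. -/
theorem infWin_winner_of_follows {f : ℕ → S}
    (hf : ∀ j, G.Follows (G.winner (f 0)) G.goodChoice (f j) (f (j + 1))) :
    G.InfWin (G.winner (f 0)) f := by
  have hw : ∀ j, G.winner (f j) = G.winner (f 0) := by
    intro j
    induction j with
    | zero => rfl
    | succ j ih => exact (goodMove_of_follows ih (hf j)).2.1.trans ih
  have hgood : ∀ j, G.GoodMove (f j) (f (j + 1)) := fun j => goodMove_of_follows (hw j) (hf j)
  obtain ⟨N, hN⟩ := WellFoundedLT.antitone_chain_condition (f := fun j => G.rank (f j))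
    (antitone_nat_of_succ_le fun j => G.rank_mono _ _ (hgood j).1)
  refine infWin_of_rank_eventually_eq G.toGame (fun j hj => (hN j hj).symm) ?_
  by_contra hne
  refine not_strictAnti_of_wellFoundedLT (fun j => G.winDepth (f (N + j)))
    (strictAnti_nat_of_succ_lt fun j => ?_)
  have hr := hN (N + j) (by omega)
  have hr' := hN (N + j + 1) (by omega)
  rcases (hgood (N + j)).2.2 (by rw [hw, ← hr]; exact Ne.symm hne) with h | h
  · omega
  · exact h.2

theorem isWinningStrategy_followTree_goodChoice (p : S) :
    G.IsWinningStrategy (G.winner p) p (G.followTree (G.winner p) G.goodChoice p) := by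
  have hinv : ∀ a b, G.winner a = G.winner p →
      G.Follows (G.winner p) G.goodChoice a b → G.winner b = G.winner p :=
    fun a b ha h => (goodMove_of_follows ha h).2.1.trans ha
  refine ⟨isStrategy_followTree fun q _ => succ_goodChoice, fun π hπ q hq hT => ?_,
    fun f hf => ?_⟩
  · rw [← mem_of_mem_followTree (I := {a | G.winner a = G.winner p}) hinv rfl hπ
      (List.mem_of_getLast? hq)]
    exact not_owns_winner_of_terminal hT
  · obtain ⟨hf0, hfollow⟩ := follows_of_prefixIn hf
    subst hf0
    exact infWin_winner_of_follows hfollow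

end WeakGame

/-- Weak games are positionally determined: from every position exactly one of the two
players has a winning strategy, and the winner has a positional winning strategy. -/
theorem weakGame_positional_determinacy {S : Type} (G : WeakGame S) (p : S) :
    Xor' (∃ τ, G.toGame.IsWinningStrategy true p τ)
         (∃ τ, G.toGame.IsWinningStrategy false p τ) ∧
    (∀ l : Bool, (∃ τ, G.toGame.IsWinningStrategy l p τ) →
      ∃ τ, G.toGame.IsWinningStrategy l p τ ∧ G.toGame.Positional l τ) := by
  have hwin := WeakGame.isWinningStrategy_followTree_goodChoice (G := G) p
  have eq_winner : ∀ l, (∃ τ, G.toGame.IsWinningStrategy l p τ) → l = G.winner p :=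
    fun l ⟨_, hτ⟩ => hτ.eq hwin
  refine ⟨?_, fun l hl => ?_⟩
  · cases hw : G.winner p
    · exact Or.inr ⟨⟨_, hw ▸ hwin⟩, fun h => by simpa [hw] using eq_winner true h⟩
    · exact Or.inl ⟨⟨_, hw ▸ hwin⟩, fun h => by simpa [hw] using eq_winner false h⟩
  · obtain rfl := eq_winner l hl
    exact ⟨_, hwin, Game.positional_followTree⟩
end

section
/- If α is a consistent signature assignment for a weak game G, then for every position p in the domain of α, player 1 has a positional winning strategy from p in G. -/
/-- Lexicographic (non-strict) order on pairs of naturals. -/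
def lexLe (x y : ℕ × ℕ) : Prop := x.1 < y.1 ∨ (x.1 = y.1 ∧ x.2 ≤ y.2)

/-- Lexicographic strict order on pairs of naturals. -/
def lexLt (x y : ℕ × ℕ) : Prop := x.1 < y.1 ∨ (x.1 = y.1 ∧ x.2 < y.2)

/-- A consistent signature assignment for a game: a partial map `α` to ℕ such that
at player-1 positions of its domain some successor stays in the domain with
lexicographically non-increasing `(rank, α)` (strictly decreasing when the rank is odd),
and at player-2 positions of the domain all successors satisfy this. -/
def ConsistentSig {S : Type} (G : Game S) (α : S → Option ℕ) : Prop :=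
  (∀ p m, α p = some m → G.own1 p →
    ∃ p', G.succ p p' ∧ ∃ m', α p' = some m' ∧
      lexLe (G.rank p', m') (G.rank p, m) ∧
      (G.rank p % 2 = 1 → lexLt (G.rank p', m') (G.rank p, m))) ∧
  (∀ p m, α p = some m → ¬ G.own1 p →
    ∀ p', G.succ p p' → ∃ m', α p' = some m' ∧
      lexLe (G.rank p', m') (G.rank p, m) ∧
      (G.rank p % 2 = 1 → lexLt (G.rank p', m') (G.rank p, m)))

/-!
Player 1 moves, at each of her positions in the domain of `α`, to a successor at which the pair
`(rank, α)` does not increase lexicographically, and strictly decreases when the rank is odd;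
consistency says every move of player 2 has this property too. So plays of this positional
strategy stay in the domain of `α` and never get stuck at a player-1 position, and along an
infinite play the pair is antitone in the well-order `ℕ ×ₗ ℕ`, hence eventually constant, which
is impossible at odd rank.
-/

namespace Game

variable {S : Type} (G : Game S)

structure ForcesEdges (E : S → S → Prop) (D : Set S) : Prop where
  exists_move : ∀ q ∈ D, G.own1 q → ∃ q', G.succ q q' ∧ E q q'
  forall_move : ∀ q ∈ D, ¬ G.own1 q → ∀ q', G.succ q q' → E q q'
  mem_of_edge : ∀ q q', E q q' → q' ∈ D

section EdgeStrategy

variable (E : S → S → Prop)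

open Classical in
noncomputable def edgeChoice (q : S) : S :=
  if h : ∃ q', G.succ q q' ∧ E q q' then h.choose else q

theorem edgeChoice_spec {q : S} (h : ∃ q', G.succ q q' ∧ E q q') :
    G.succ q (G.edgeChoice E q) ∧ E q (G.edgeChoice E q) := by
  rw [edgeChoice, dif_pos h]
  exact h.choose_spec

def EdgeStep (q q' : S) : Prop :=
  G.succ q q' ∧ E q q' ∧ (G.own1 q → q' = G.edgeChoice E q)

def edgeTree (D : Set S) (p : S) : Set (List S) :=
  {π | π.head? = some p ∧ π.IsChain (G.EdgeStep E) ∧ ∀ q ∈ π, q ∈ D}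

variable {G E} {D : Set S} {p : S}

theorem append_mem_edgeTree {π : List S} {q q' : S} (hπ : π ∈ G.edgeTree E D p)
    (hq : π.getLast? = some q) (hstep : G.EdgeStep E q q') (hq' : q' ∈ D) :
    π ++ [q'] ∈ G.edgeTree E D p := by
  obtain ⟨hhead, hchain, hmem⟩ := hπ
  refine ⟨?_, List.isChain_append.2 ⟨hchain, List.isChain_singleton q', ?_⟩, ?_⟩
  · simp [List.head?_append, hhead]
  · simp [hq, hstep]
  · simpa [or_imp, forall_and] using ⟨hmem, hq'⟩

theorem edgeStep_of_append_mem_edgeTree {π : List S} {q q' : S}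
    (h : π ++ [q'] ∈ G.edgeTree E D p) (hq : π.getLast? = some q) : G.EdgeStep E q q' :=
  (List.isChain_append.1 h.2.1).2.2 q (by simp [hq]) q' (by simp)

theorem isStrategy_edgeTree (hF : G.ForcesEdges E D) (hp : p ∈ D) :
    G.IsStrategy true p (G.edgeTree E D p) := by
  refine ⟨⟨rfl, List.isChain_singleton p, by simpa using hp⟩, ?_, ?_, ?_, ?_⟩
  · rintro π ⟨hhead, hchain, -⟩
    exact ⟨⟨(by rintro rfl; simp at hhead), hchain.imp fun _ _ h => h.1⟩, hhead⟩
  · rintro π ⟨hhead, hchain, hmem⟩ hne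
    refine ⟨?_, hchain.prefix (List.dropLast_prefix π),
      fun q hq => hmem q ((List.dropLast_prefix π).subset hq)⟩
    obtain ⟨q, π', rfl⟩ := List.exists_cons_of_ne_nil (show π ≠ [] by rintro rfl; simp at hhead)
    cases π' with
    | nil => simp_all
    | cons q' π'' => simpa using hhead
  · rintro π hπ q hq (hown : G.own1 q) hmove
    have hD : q ∈ D := hπ.2.2 q (List.mem_of_getLast? hq)
    obtain ⟨hsucc, hE⟩ := G.edgeChoice_spec E (hF.exists_move q hD hown)
    refine ⟨G.edgeChoice E q, ⟨hsucc, append_mem_edgeTree hπ hq ⟨hsucc, hE, fun _ => rfl⟩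
      (hF.mem_of_edge _ _ hE)⟩, ?_⟩
    rintro q' ⟨-, h⟩
    exact (edgeStep_of_append_mem_edgeTree h hq).2.2 hown
  · rintro π hπ q hq (hown : ¬ G.own1 q) q' hsucc
    have hE := hF.forall_move q (hπ.2.2 q (List.mem_of_getLast? hq)) hown q' hsucc
    exact append_mem_edgeTree hπ hq ⟨hsucc, hE, fun h => absurd h hown⟩
      (hF.mem_of_edge _ _ hE)

theorem positional_edgeTree : G.Positional true (G.edgeTree E D p) := by
  rintro π₁ π₂ q q₁ q₂ - - hq₁ hq₂ (hown : G.own1 q) h₁ h₂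
  rw [(edgeStep_of_append_mem_edgeTree h₁ hq₁).2.2 hown,
    (edgeStep_of_append_mem_edgeTree h₂ hq₂).2.2 hown]

theorem edgeTree_not_own1_of_terminal (hF : G.ForcesEdges E D) {π : List S} {q : S}
    (hπ : π ∈ G.edgeTree E D p) (hq : π.getLast? = some q) (hterm : G.Terminal q) :
    ¬ G.own1 q := fun hown =>
  let ⟨_, hsucc, _⟩ := hF.exists_move q (hπ.2.2 q (List.mem_of_getLast? hq)) hown
  hterm _ hsucc

theorem edge_of_prefixIn_edgeTree {f : ℕ → S} (hf : prefixIn (G.edgeTree E D p) f) (j : ℕ) :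
    E (f j) (f (j + 1)) :=
  (List.isChain_ofFn.1 (hf (j + 1)).2.1 j (by omega)).2.1

theorem exists_positional_winning_of_forcesEdges (hF : G.ForcesEdges E D)
    (hwin : ∀ f : ℕ → S, (∀ j, E (f j) (f (j + 1))) → G.InfWin true f) (hp : p ∈ D) :
    ∃ τ, G.IsWinningStrategy true p τ ∧ G.Positional true τ :=
  ⟨G.edgeTree E D p,
    ⟨isStrategy_edgeTree hF hp, fun _ hπ _ hq hterm => edgeTree_not_own1_of_terminal hF hπ hq hterm,
      fun _ hf => hwin _ (edge_of_prefixIn_edgeTree hf)⟩,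
    positional_edgeTree⟩

end EdgeStrategy

end Game

section Signature

variable {S : Type} {G : Game S} {α : S → Option ℕ}

theorem lexLe_iff_toLex_le {x y : ℕ × ℕ} : lexLe x y ↔ toLex x ≤ toLex y :=
  Prod.Lex.toLex_le_toLex.symm

theorem lexLt_iff_toLex_lt {x y : ℕ × ℕ} : lexLt x y ↔ toLex x < toLex y :=
  Prod.Lex.toLex_lt_toLex.symm

variable (G α) in
def SigDecreases (q q' : S) : Prop :=
  ∃ m m', α q = some m ∧ α q' = some m' ∧ lexLe (G.rank q', m') (G.rank q, m) ∧
    (G.rank q % 2 = 1 → lexLt (G.rank q', m') (G.rank q, m))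

theorem ConsistentSig.forcesEdges (hα : ConsistentSig G α) :
    G.ForcesEdges (SigDecreases G α) {q | (α q).isSome} where
  exists_move q hq hown := by
    obtain ⟨m, hm⟩ := Option.isSome_iff_exists.1 hq
    obtain ⟨q', hsucc, m', hm', hle, hlt⟩ := hα.1 q m hm hown
    exact ⟨q', hsucc, m, m', hm, hm', hle, hlt⟩
  forall_move q hq hown q' hsucc := by
    obtain ⟨m, hm⟩ := Option.isSome_iff_exists.1 hq
    obtain ⟨m', hm', hle, hlt⟩ := hα.2 q m hm hown q' hsucc
    exact ⟨m, m', hm, hm', hle, hlt⟩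
  mem_of_edge _ _ := fun ⟨_, _, _, hm', _⟩ => by simp [hm']

theorem infWin_of_sigDecreases {f : ℕ → S} (hf : ∀ j, SigDecreases G α (f j) (f (j + 1))) :
    G.InfWin true f := by
  choose m m' hm hm' hle hlt using hf
  have hshift : ∀ j, m' j = m (j + 1) := fun j =>
    Option.some_injective _ ((hm' j).symm.trans (hm (j + 1)))
  simp only [hshift] at hle hlt
  set x : ℕ → ℕ ×ₗ ℕ := fun j => toLex (G.rank (f j), m j)
  have hanti : Antitone x := antitone_nat_of_succ_le fun j => lexLe_iff_toLex_le.1 (hle j)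
  obtain ⟨N, hN⟩ := WellFoundedLT.antitone_chain_condition hanti
  have hrank : ∀ j, N ≤ j → G.rank (f j) = G.rank (f N) := fun j hj =>
    congrArg (fun y => (ofLex y).1) (hN j hj).symm
  refine ⟨N, hrank, ?_⟩
  by_contra hodd
  have hlt' := lexLt_iff_toLex_lt.1 (hlt N (by simpa using hodd))
  exact hlt'.ne (hN (N + 1) N.le_succ).symm

end Signature

/-- If `α` is a consistent signature assignment for a weak game, then player 1 has a
positional winning strategy from every position in the domain of `α`. -/
theorem consistentSig_gives_player1_positional_win {S : Type} (G : WeakGame S)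
    (α : S → Option ℕ) (hα : ConsistentSig G.toGame α) (p : S) (hp : (α p).isSome) :
    ∃ τ, G.toGame.IsWinningStrategy true p τ ∧ G.toGame.Positional true τ :=
  G.toGame.exists_positional_winning_of_forcesEdges hα.forcesEdges
    (fun _ hf => infWin_of_sigDecreases hf) hp
end

section
/- In every weak game G there exists a consistent signature assignment α such that for every position p not in the domain of α, player 2 has a positional winning strategy from p. -/
/-
The pointwise minimum of any family of consistent signature assignments is again consistent,
so there is a consistent assignment `α` whose domain `D` contains the domain of every other one;
zeroing a consistent assignment at even ranks keeps it consistent, so `α` vanishes there.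
Maximality of `D` gives player 2 what she needs outside `D`: a player-1 position outside `D`
has all its successors outside `D`, and a player-2 position outside `D` has one, for otherwise
`α` could be extended to it. At an even rank `r` she can moreover force, without entering `D`,
a drop below rank `r` in finitely many moves: the positions of rank `r` outside `D` from which
she cannot would extend `α` with signature `0`, and finite branching makes "finitely many"
uniform at player-1 positions. Following these moves positionally keeps every play outside
`D`, a finite play can only end at a player-1 position, and an infinite play cannot settle at
an even rank.
-/

open Classical

theorem Set.Finite.exists_forall_of_monotone {α : Type*} {s : Set α} (hs : s.Finite)
    {P : ℕ → α → Prop} (hP : ∀ x, Monotone (P · x)) (h : ∀ x ∈ s, ∃ n, P n x) :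
    ∃ N, ∀ x ∈ s, P N x :=
  (hs.eventually_all.2 fun x hx =>
    let ⟨n, hn⟩ := h x hx
    Filter.eventually_atTop.2 ⟨n, fun _ hk => hP x hk hn⟩).exists

namespace Game

variable {S : Type} (G : Game S)

section Signatures

def SigDecr (α : S → Option ℕ) (p : S) (m : ℕ) (q : S) : Prop :=
  ∃ m', α q = some m' ∧ lexLe (G.rank q, m') (G.rank p, m) ∧
    (G.rank p % 2 = 1 → lexLt (G.rank q, m') (G.rank p, m))

def SigCond (α : S → Option ℕ) (p : S) (m : ℕ) : Prop :=
  (G.own1 p → ∃ q, G.succ p q ∧ G.SigDecr α p m q) ∧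
    (¬ G.own1 p → ∀ q, G.succ p q → G.SigDecr α p m q)

theorem consistentSig_iff {α : S → Option ℕ} :
    ConsistentSig G α ↔ ∀ p m, α p = some m → G.SigCond α p m :=
  ⟨fun h p m hm => ⟨h.1 p m hm, h.2 p m hm⟩,
    fun h => ⟨fun p m hm => (h p m hm).1, fun p m hm => (h p m hm).2⟩⟩

variable {G}

theorem SigCond.imp {α β : S → Option ℕ} {p : S} {m m' : ℕ} (h : G.SigCond α p m)
    (H : ∀ q, G.SigDecr α p m q → G.SigDecr β p m' q) : G.SigCond β p m' :=
  ⟨fun hp => (h.1 hp).imp fun q hq => ⟨hq.1, H q hq.2⟩, fun hp q hpq => H q (h.2 hp q hpq)⟩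

def SigLE (β α : S → Option ℕ) : Prop :=
  ∀ p m, α p = some m → ∃ m' ≤ m, β p = some m'

theorem SigDecr.mono {α β : S → Option ℕ} {p q : S} {m : ℕ} (hβ : SigLE β α)
    (h : G.SigDecr α p m q) : G.SigDecr β p m q := by
  obtain ⟨m', hq, hle, hlt⟩ := h
  obtain ⟨m'', hm'', hq'⟩ := hβ q m' hq
  refine ⟨m'', hq', ?_, fun hodd => ?_⟩
  · simp only [lexLe] at *
    omega
  · have := hlt hodd
    simp only [lexLt] at *
    omega

variable (G)

noncomputable def minSig (p : S) : Option ℕ :=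
  if h : ∃ m α, ConsistentSig G α ∧ α p = some m then some (Nat.find h) else none

theorem minSig_le {α : S → Option ℕ} (hα : ConsistentSig G α) : SigLE G.minSig α := by
  intro p m hm
  have h : ∃ m α, ConsistentSig G α ∧ α p = some m := ⟨m, α, hα, hm⟩
  exact ⟨Nat.find h, Nat.find_min' h ⟨α, hα, hm⟩, dif_pos h⟩

theorem consistentSig_minSig : ConsistentSig G G.minSig := by
  refine (consistentSig_iff G).2 fun p m hm => ?_
  unfold minSig at hm
  split_ifs at hm with h
  obtain ⟨α, hα, hp⟩ := Nat.find_spec h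
  cases hm
  exact ((consistentSig_iff G).1 hα p _ hp).imp fun q hq => hq.mono (G.minSig_le hα)

def zeroEven (α : S → Option ℕ) (p : S) : Option ℕ :=
  if G.rank p % 2 = 0 then (α p).map fun _ => 0 else α p

theorem consistentSig_zeroEven {α : S → Option ℕ} (hα : ConsistentSig G α) :
    ConsistentSig G (G.zeroEven α) := by
  refine (consistentSig_iff G).2 fun p m hm => ?_
  obtain ⟨m₀, hp, rfl⟩ : ∃ m₀, α p = some m₀ ∧ m = if G.rank p % 2 = 0 then 0 else m₀ := by
    unfold zeroEven at hm
    cases h : α p <;> split_ifs at hm <;> simp_all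
  refine ((consistentSig_iff G).1 hα p m₀ hp).imp fun q ⟨m', hq, hle, hlt⟩ => ?_
  refine ⟨if G.rank q % 2 = 0 then 0 else m', by unfold zeroEven; split_ifs <;> simp [hq], ?_⟩
  simp only [lexLe, lexLt] at *
  split_ifs <;> omega

theorem minSig_eq_zero_of_even {p : S} {m : ℕ} (hp : G.minSig p = some m)
    (heven : G.rank p % 2 = 0) : m = 0 := by
  obtain ⟨m', hm', hp'⟩ :=
    G.minSig_le (G.consistentSig_zeroEven G.consistentSig_minSig) p 0
      (by simp [zeroEven, heven, hp])
  rw [hp] at hp'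
  cases hp'
  omega

theorem consistentSig_piecewise {α : S → Option ℕ} (hα : ConsistentSig G α) {Y : Set S}
    [DecidablePred (· ∈ Y)] {m : ℕ} (hYα : ∀ p ∈ Y, α p = none)
    (hY : ∀ p ∈ Y, G.SigCond (Y.piecewise (fun _ => some m) α) p m) :
    ConsistentSig G (Y.piecewise (fun _ => some m) α) := by
  refine (consistentSig_iff G).2 fun p k hk => ?_
  by_cases hp : p ∈ Y
  · rw [Set.piecewise_eq_of_mem _ _ _ hp] at hk
    cases hk
    exact hY p hp
  · rw [Set.piecewise_eq_of_notMem _ _ _ hp] at hk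
    refine ((consistentSig_iff G).1 hα p k hk).imp fun q hq => hq.mono fun x k' hx => ?_
    have hxY : x ∉ Y := fun h => by simp [hYα x h] at hx
    exact ⟨k', le_rfl, by rw [Set.piecewise_eq_of_notMem _ _ _ hxY, hx]⟩

theorem eq_empty_of_sigCond_piecewise {Y : Set S} [DecidablePred (· ∈ Y)] {m : ℕ}
    (hYB : ∀ p ∈ Y, G.minSig p = none)
    (hY : ∀ p ∈ Y, G.SigCond (Y.piecewise (fun _ => some m) G.minSig) p m) : Y = ∅ := by
  refine Set.eq_empty_of_forall_notMem fun p hp => ?_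
  obtain ⟨_, -, h⟩ := G.minSig_le (G.consistentSig_piecewise G.consistentSig_minSig hYB hY) p m
    (Set.piecewise_eq_of_mem _ _ _ hp)
  simp [hYB p hp] at h

end Signatures

section Strategies

theorem owns_false_iff {p : S} : G.Owns false p ↔ ¬ G.own1 p := Iff.rfl

def Step (σ : S → S) (a b : S) : Prop := G.succ a b ∧ (¬ G.own1 a → b = σ a)

def positionalStrategy (σ : S → S) (p : S) : Set (List S) :=
  {π | π.head? = some p ∧ π.IsChain (G.Step σ)}

variable {G} {σ : S → S} {p : S}

theorem append_mem_positionalStrategy_iff {π : List S} {q c : S}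
    (hπ : π ∈ G.positionalStrategy σ p) (hq : π.getLast? = some q) :
    π ++ [c] ∈ G.positionalStrategy σ p ↔ G.Step σ q c := by
  have hne : π ≠ [] := by rintro rfl; simp at hq
  simp [positionalStrategy, List.head?_append_of_ne_nil _ hne, hπ.1, List.isChain_append, hπ.2,
    hq]

theorem dropLast_mem_positionalStrategy {π : List S} (hπ : π ∈ G.positionalStrategy σ p)
    (hne : π ≠ [p]) : π.dropLast ∈ G.positionalStrategy σ p := by
  obtain ⟨hhead, hchain⟩ := hπ
  obtain ⟨b, l, rfl⟩ : ∃ b l, π = p :: b :: l := by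
    match π, hhead, hne with
    | [_], rfl, hne => exact absurd rfl hne
    | _ :: b :: l, rfl, _ => exact ⟨b, l, rfl⟩
  exact ⟨by simp, hchain.dropLast⟩

theorem forall_mem_of_mem_positionalStrategy {P : S → Prop} {π : List S} (hp : P p)
    (hstep : ∀ a b, P a → G.Step σ a b → P b) (hπ : π ∈ G.positionalStrategy σ p) :
    ∀ q ∈ π, P q :=
  hπ.2.induction _ _ (fun a b hab ha => hstep a b ha hab)
    fun hne => by rwa [Option.some_injective _ ((List.head?_eq_some_head hne).symm.trans hπ.1)]

theorem prefixIn_positionalStrategy {f : ℕ → S} (hf : prefixIn (G.positionalStrategy σ p) f) :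
    f 0 = p ∧ ∀ i, G.Step σ (f i) (f (i + 1)) := by
  refine ⟨by simpa [List.ofFn_succ] using (hf 0).1, fun i => ?_⟩
  simpa using List.isChain_ofFn.1 (hf (i + 1)).2 i (by omega)

variable (G)

theorem isStrategy_positionalStrategy
    (hσ : ∀ q, ¬ G.own1 q → (∃ q', G.succ q q') → G.succ q (σ q)) :
    G.IsStrategy false p (G.positionalStrategy σ p) := by
  refine ⟨⟨rfl, List.isChain_singleton p⟩, fun π hπ => ⟨⟨?_, hπ.2.imp fun _ _ h => h.1⟩, hπ.1⟩,
    fun π hπ hne => dropLast_mem_positionalStrategy hπ hne, ?_, ?_⟩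
  · rintro rfl
    simp [positionalStrategy] at hπ
  · intro π hπ q hq hown hnt
    refine ⟨σ q, ⟨hσ q hown hnt, (append_mem_positionalStrategy_iff hπ hq).2 ⟨hσ q hown hnt,
      fun _ => rfl⟩⟩, fun c hc => ((append_mem_positionalStrategy_iff hπ hq).1 hc.2).2 hown⟩
  · intro π hπ q hq hown c hqc
    exact (append_mem_positionalStrategy_iff hπ hq).2 ⟨hqc, fun h => absurd h hown⟩

theorem positional_positionalStrategy : G.Positional false (G.positionalStrategy σ p) := by
  intro π₁ π₂ q q₁ q₂ h₁ h₂ hq₁ hq₂ hown he₁ he₂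
  rw [((append_mem_positionalStrategy_iff h₁ hq₁).1 he₁).2 hown,
    ((append_mem_positionalStrategy_iff h₂ hq₂).1 he₂).2 hown]

end Strategies

section Player2

def Descends (μ : S → ℕ) (p q : S) : Prop :=
  G.rank q < G.rank p ∨ (G.rank q = G.rank p ∧ (G.rank p % 2 = 0 → μ q < μ p))

def Player2Sig (B : Set S) (μ : S → ℕ) : Prop :=
  ∀ p ∈ B, (G.own1 p → ∀ q, G.succ p q → q ∈ B ∧ G.Descends μ p q) ∧
    (¬ G.own1 p → ∃ q, G.succ p q ∧ q ∈ B ∧ G.Descends μ p q)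

variable {G}

theorem infWin_false_of_descends {μ : S → ℕ} {f : ℕ → S}
    (hf : ∀ i, G.Descends μ (f i) (f (i + 1))) : G.InfWin false f := by
  have hanti : Antitone (G.rank ∘ f) :=
    antitone_nat_of_succ_le fun i => by
      rcases hf i with h | h <;> simp only [Function.comp] <;> omega
  obtain ⟨N, hN⟩ := WellFoundedLT.antitone_chain_condition hanti
  refine ⟨N, fun j hj => (hN j hj).symm, ?_⟩
  by_contra hodd
  refine not_strictAnti_of_wellFoundedLT (fun j => μ (f (N + j)))
    (strictAnti_nat_of_succ_lt fun j => ?_)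
  have h₁ : G.rank (f (N + j)) = G.rank (f N) := (hN _ (by omega)).symm
  have h₂ : G.rank (f (N + j + 1)) = G.rank (f N) := (hN _ (by omega)).symm
  rcases hf (N + j) with h | ⟨-, h⟩
  · omega
  · exact h (by simp at hodd; omega)

variable (G)

-- Outside `B` any successor will do: this makes it a legal move everywhere.
noncomputable def descentMove (B : Set S) (μ : S → ℕ) (p : S) : S :=
  if h : ∃ q, G.succ p q ∧ (p ∈ B → q ∈ B ∧ G.Descends μ p q) then h.choose else p

variable {G} {B : Set S} {μ : S → ℕ}

theorem descentMove_spec {p : S} (h : ∃ q, G.succ p q ∧ (p ∈ B → q ∈ B ∧ G.Descends μ p q)) :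
    G.succ p (G.descentMove B μ p) ∧
      (p ∈ B → G.descentMove B μ p ∈ B ∧ G.Descends μ p (G.descentMove B μ p)) := by
  rw [descentMove, dif_pos h]
  exact h.choose_spec

theorem Player2Sig.exists_move (h : G.Player2Sig B μ) {p : S} (hown : ¬ G.own1 p)
    (hnt : ∃ q, G.succ p q) : ∃ q, G.succ p q ∧ (p ∈ B → q ∈ B ∧ G.Descends μ p q) := by
  by_cases hp : p ∈ B
  · obtain ⟨q, hpq, hq⟩ := (h p hp).2 hown
    exact ⟨q, hpq, fun _ => hq⟩
  · obtain ⟨q, hpq⟩ := hnt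
    exact ⟨q, hpq, fun h => absurd h hp⟩

theorem Player2Sig.mem_and_descends_of_step {a b : S} (h : G.Player2Sig B μ) (ha : a ∈ B)
    (hab : G.Step (G.descentMove B μ) a b) : b ∈ B ∧ G.Descends μ a b := by
  by_cases hown : G.own1 a
  · exact (h a ha).1 hown b hab.1
  · rw [hab.2 hown]
    exact (descentMove_spec (h.exists_move hown ⟨b, hab.1⟩)).2 ha

theorem Player2Sig.isWinningStrategy (h : G.Player2Sig B μ) {p : S} (hp : p ∈ B) :
    G.IsWinningStrategy false p (G.positionalStrategy (G.descentMove B μ) p) := by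
  refine ⟨G.isStrategy_positionalStrategy fun q hown hnt =>
      (descentMove_spec (h.exists_move hown hnt)).1, fun π hπ q hq hterm => ?_, fun f hf => ?_⟩
  · have hqB : q ∈ B := forall_mem_of_mem_positionalStrategy hp
      (fun _ _ ha hab => (h.mem_and_descends_of_step ha hab).1) hπ q (List.mem_of_getLast? hq)
    rw [owns_false_iff, not_not]
    by_contra hown
    obtain ⟨c, hc, -⟩ := (h q hqB).2 hown
    exact hterm c hc
  · obtain ⟨hf0, hstep⟩ := prefixIn_positionalStrategy hf
    have hfB : ∀ i, f i ∈ B := fun i => by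
      induction i with
      | zero => exact hf0 ▸ hp
      | succ i ih => exact (h.mem_and_descends_of_step ih (hstep i)).1
    exact infWin_false_of_descends fun i => (h.mem_and_descends_of_step (hfB i) (hstep i)).2

end Player2

section RankDrop

def ForcesRankDrop (B : Set S) (r : ℕ) : ℕ → S → Prop
  | 0, _ => False
  | n + 1, p => p ∈ B ∧
      (G.own1 p → ∀ q, G.succ p q → G.rank q < r ∨ ForcesRankDrop B r n q) ∧
      (¬ G.own1 p → ∃ q, G.succ p q ∧ (G.rank q < r ∧ q ∈ B ∨ ForcesRankDrop B r n q))

variable {G} {B : Set S} {r : ℕ}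

theorem ForcesRankDrop.mem {n : ℕ} {p : S} (h : G.ForcesRankDrop B r n p) : p ∈ B := by
  cases n with
  | zero => exact h.elim
  | succ n => exact h.1

theorem forcesRankDrop_mono (p : S) : Monotone (G.ForcesRankDrop B r · p) := by
  have hsucc : ∀ n p, G.ForcesRankDrop B r n p → G.ForcesRankDrop B r (n + 1) p := by
    intro n
    induction n with
    | zero => exact fun _ h => h.elim
    | succ n ih =>
      rintro p ⟨hp, h₁, h₂⟩
      exact ⟨hp, fun hown q hq => (h₁ hown q hq).imp_right (ih q),
        fun hown => (h₂ hown).imp fun q hq => ⟨hq.1, hq.2.imp_right (ih q)⟩⟩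
  exact monotone_nat_of_le_succ fun n => hsucc n p

theorem exists_forcesRankDrop_of_forall_succ {y : S} (hfin : {q | G.succ y q}.Finite)
    (hy : y ∈ B) (hown : G.own1 y)
    (h : ∀ q, G.succ y q → G.rank q < r ∨ ∃ n, G.ForcesRankDrop B r n q) :
    ∃ n, G.ForcesRankDrop B r n y := by
  obtain ⟨N, hN⟩ := hfin.exists_forall_of_monotone
    (P := fun n q => G.rank q < r ∨ G.ForcesRankDrop B r n q)
    (fun q _ _ hle => Or.imp_right (forcesRankDrop_mono q hle))
    fun q hyq => (h q hyq).elim (fun h => ⟨0, Or.inl h⟩) fun ⟨n, hn⟩ => ⟨n, Or.inr hn⟩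
  exact ⟨N + 1, hy, fun _ q hq => hN q hq, fun h => absurd hown h⟩

variable (G)

noncomputable def dropCount (B : Set S) (p : S) : ℕ :=
  if h : ∃ n, G.ForcesRankDrop B (G.rank p) n p then Nat.find h else 0

variable {G}

theorem dropCount_le {n : ℕ} {p : S} (h : G.ForcesRankDrop B (G.rank p) n p) :
    G.dropCount B p ≤ n := by
  rw [dropCount, dif_pos ⟨n, h⟩]
  exact Nat.find_min' _ h

theorem exists_dropCount_eq_succ {p : S} (h : ∃ n, G.ForcesRankDrop B (G.rank p) n p) :
    ∃ n, G.dropCount B p = n + 1 ∧ G.ForcesRankDrop B (G.rank p) (n + 1) p := by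
  have hspec : G.ForcesRankDrop B (G.rank p) (G.dropCount B p) p := by
    rw [dropCount, dif_pos h]
    exact Nat.find_spec h
  obtain ⟨n, hn⟩ : ∃ n, G.dropCount B p = n + 1 :=
    Nat.exists_eq_succ_of_ne_zero fun h0 => by rw [h0] at hspec; exact hspec
  exact ⟨n, hn, hn ▸ hspec⟩

end RankDrop

end Game

namespace WeakGame

open Game

variable {S : Type} {G : WeakGame S}

theorem sigDecr_of_lt {α : S → Option ℕ} {p q : S} {m m' : ℕ} (hpq : G.succ p q)
    (hq : α q = some m') (hm : m' < m) : G.SigDecr α p m q := by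
  have := G.rank_mono p q hpq
  refine ⟨m', hq, ?_, fun _ => ?_⟩ <;> simp only [lexLe, lexLt] <;> omega

theorem descends_of_succ {μ : S → ℕ} {p q : S} (hpq : G.succ p q)
    (h : G.rank q = G.rank p → G.rank p % 2 = 0 → μ q < μ p) : G.Descends μ p q := by
  rcases (G.rank_mono p q hpq).lt_or_eq with hlt | heq
  · exact Or.inl hlt
  · exact Or.inr ⟨heq, h heq⟩

theorem minSig_eq_none_of_succ {p q : S} (hp : G.minSig p = none) (hown : G.own1 p)
    (hpq : G.succ p q) : G.minSig q = none := by
  by_contra hq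
  obtain ⟨m', hm'⟩ := Option.ne_none_iff_exists'.1 hq
  have hqp : q ∉ ({p} : Set S) := fun h => hq (h ▸ hp)
  refine Set.singleton_ne_empty p (G.eq_empty_of_sigCond_piecewise (m := m' + 1) (by simpa) ?_)
  simp only [Set.mem_singleton_iff, forall_eq]
  refine ⟨fun _ => ⟨q, hpq, sigDecr_of_lt hpq ?_ (Nat.lt_succ_self m')⟩, fun h => absurd hown h⟩
  rwa [Set.piecewise_eq_of_notMem _ _ _ hqp]

theorem exists_succ_minSig_eq_none {p : S} (hp : G.minSig p = none) (hown : ¬ G.own1 p) :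
    ∃ q, G.succ p q ∧ G.minSig q = none := by
  by_contra! hgood
  obtain ⟨N, hN⟩ := (G.finBranch p).exists_forall_of_monotone
    (P := fun N q => ∃ m' ≤ N, G.minSig q = some m')
    (fun _ _ _ hle ⟨m', hm', hq⟩ => ⟨m', hm'.trans hle, hq⟩)
    fun q hq => (Option.ne_none_iff_exists'.1 (hgood q hq)).imp fun m' hm' => ⟨m', le_rfl, hm'⟩
  refine Set.singleton_ne_empty p (G.eq_empty_of_sigCond_piecewise (m := N + 1) (by simpa) ?_)
  simp only [Set.mem_singleton_iff, forall_eq]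
  refine ⟨fun h => absurd h hown, fun _ q hpq => ?_⟩
  obtain ⟨m', hm'N, hq⟩ := hN q hpq
  have hqp : q ∉ ({p} : Set S) := fun h => hgood q hpq (h ▸ hp)
  exact sigDecr_of_lt hpq (by rwa [Set.piecewise_eq_of_notMem _ _ _ hqp]) (Nat.lt_succ_of_le hm'N)

theorem sigDecr_piecewise_zero {Y : Set S} [DecidablePred (· ∈ Y)] {y q : S}
    (hY : ∀ x ∈ Y, G.rank x = G.rank y) (heven : G.rank y % 2 = 0) (hyq : G.succ y q)
    (hq : q ∈ Y ∨ G.minSig q ≠ none) :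
    G.SigDecr (Y.piecewise (fun _ => some 0) G.minSig) y 0 q := by
  by_cases hqY : q ∈ Y
  · refine ⟨0, Set.piecewise_eq_of_mem _ _ _ hqY, Or.inr ⟨hY q hqY, le_rfl⟩, fun hodd => by omega⟩
  · obtain ⟨m', hm'⟩ := Option.ne_none_iff_exists'.1 (hq.resolve_left hqY)
    refine ⟨m', by rw [Set.piecewise_eq_of_notMem _ _ _ hqY, hm'], ?_, fun hodd => by omega⟩
    rcases (G.rank_mono y q hyq).lt_or_eq with hlt | heq
    · exact Or.inl hlt
    · exact Or.inr ⟨heq, (G.minSig_eq_zero_of_even hm' (heq ▸ heven)).le⟩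

theorem exists_forcesRankDrop {p : S} (hp : G.minSig p = none) (heven : G.rank p % 2 = 0) :
    ∃ n, G.ForcesRankDrop {q | G.minSig q = none} (G.rank p) n p := by
  set B := {q | G.minSig q = none}
  set r := G.rank p
  by_contra! hnever
  set Y := {q | q ∈ B ∧ G.rank q = r ∧ ∀ n, ¬ G.ForcesRankDrop B r n q}
  suffices hY : Y = ∅ from Set.eq_empty_iff_forall_notMem.1 hY p ⟨hp, rfl, hnever⟩
  refine G.eq_empty_of_sigCond_piecewise (m := 0) (fun q hq => hq.1) fun y ⟨hyB, hyr, hy⟩ => ?_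
  have hdecr : ∀ q, G.succ y q → q ∈ Y ∨ G.minSig q ≠ none →
      G.SigDecr (Y.piecewise (fun _ => some 0) G.minSig) y 0 q := fun q hyq hq =>
    sigDecr_piecewise_zero (fun x hx => hx.2.1.trans hyr.symm) (hyr ▸ heven) hyq hq
  have hdrop : ∀ q, G.succ y q → ¬ G.SigDecr (Y.piecewise (fun _ => some 0) G.minSig) y 0 q →
      G.rank q < r ∧ q ∈ B ∨ ∃ n, G.ForcesRankDrop B r n q := by
    intro q hyq hq
    have hqB : q ∈ B := by_contra fun h => hq (hdecr q hyq (Or.inr h))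
    have hqY : q ∉ Y := fun h => hq (hdecr q hyq (Or.inl h))
    rcases (G.rank_mono y q hyq).lt_or_eq with hlt | heq
    · exact Or.inl ⟨hyr ▸ hlt, hqB⟩
    · by_contra! h
      exact hqY ⟨hqB, heq.trans hyr, h.2⟩
  constructor
  · intro hown
    by_contra! hall
    obtain ⟨n, hn⟩ := exists_forcesRankDrop_of_forall_succ (G.finBranch y) hyB hown
      fun q hyq => (hdrop q hyq (hall q hyq)).imp_left And.left
    exact hy n hn
  · intro hown q hyq
    by_contra hq
    rcases hdrop q hyq hq with h | ⟨n, hn⟩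
    · exact hy 1 ⟨hyB, fun h => absurd h hown, fun _ => ⟨q, hyq, Or.inl h⟩⟩
    · exact hy (n + 1) ⟨hyB, fun h => absurd h hown, fun _ => ⟨q, hyq, Or.inr hn⟩⟩

variable (G)

theorem player2Sig_minSig :
    G.Player2Sig {p | G.minSig p = none} (G.dropCount {p | G.minSig p = none}) := by
  intro p hp
  constructor
  · intro hown q hpq
    refine ⟨minSig_eq_none_of_succ hp hown hpq, descends_of_succ hpq fun hrank heven => ?_⟩
    obtain ⟨n, hn, hF⟩ := exists_dropCount_eq_succ (exists_forcesRankDrop hp heven)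
    rcases hF.2.1 hown q hpq with hlt | hq
    · omega
    · rw [hn]
      exact Nat.lt_succ_of_le (dropCount_le (hrank ▸ hq))
  · intro hown
    by_cases heven : G.rank p % 2 = 0
    · obtain ⟨n, hn, hF⟩ := exists_dropCount_eq_succ (exists_forcesRankDrop hp heven)
      obtain ⟨q, hpq, hlow | hq⟩ := hF.2.2 hown
      · exact ⟨q, hpq, hlow.2, Or.inl hlow.1⟩
      · refine ⟨q, hpq, hq.mem, descends_of_succ hpq fun hrank _ => ?_⟩
        rw [hn]
        exact Nat.lt_succ_of_le (dropCount_le (hrank ▸ hq))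
    · obtain ⟨q, hpq, hq⟩ := exists_succ_minSig_eq_none hp hown
      exact ⟨q, hpq, hq, descends_of_succ hpq fun _ h => absurd h heven⟩

end WeakGame

/-- Every weak game admits a consistent signature assignment such that player 2 has a
positional winning strategy from every position outside its domain. -/
theorem exists_consistentSig_player2_wins_outside {S : Type} (G : WeakGame S) :
    ∃ α : S → Option ℕ, ConsistentSig G.toGame α ∧
      ∀ p : S, α p = none →
        ∃ τ, G.toGame.IsWinningStrategy false p τ ∧ G.toGame.Positional false τ :=
  ⟨G.minSig, G.consistentSig_minSig, fun _ hp =>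
    ⟨_, G.player2Sig_minSig.isWinningStrategy hp, G.positional_positionalStrategy⟩⟩
end

section
/- Every infinite run of an incrementing counter automaton can be normalized so that its only incrementing errors are faulty decrements: for every run of an incrementing CA there exists a run over the same input word, visiting the same sequence of locations, whose only deviations from error-free semantics are decrement instructions that leave the counter unchanged. -/
/-- Counter instructions: increment, decrement (requires positivity), zero test. -/
inductive CInstr where
  | inc (c : ℕ)
  | dec (c : ℕ)
  | ifz (c : ℕ)

/-- A counter automaton with ε-transitions and zero-testing; targets of ε-transitions
are not accepting. -/
structure CA (A : Type) where
  Q : Type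
  qI : Q
  n : ℕ
  δ : Q → Option A → CInstr → Q → Prop
  F : Set Q
  instr_lt : ∀ q w l q', δ q w l q' →
    (match l with | .inc c => c < n | .dec c => c < n | .ifz c => c < n)
  eps_noacc : ∀ q l q', δ q none l q' → q' ∉ F

/-- Error-free execution of a counter instruction. -/
def cexec (l : CInstr) (v v' : ℕ → ℕ) : Prop :=
  match l with
  | .inc c => v' = Function.update v c (v c + 1)
  | .dec c => 0 < v c ∧ v' = Function.update v c (v c - 1)
  | .ifz c => v c = 0 ∧ v' = v

/-- An error-free (Minsky) transition. -/
def MStep {A : Type} (M : CA A) (q : M.Q) (v : ℕ → ℕ) (w : Option A) (l : CInstr)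
    (q' : M.Q) (v' : ℕ → ℕ) : Prop :=
  M.δ q w l q' ∧ cexec l v v'

/-- An incrementing transition: counters may erroneously increase before and after. -/
def IStep {A : Type} (M : CA A) (q : M.Q) (v : ℕ → ℕ) (w : Option A) (l : CInstr)
    (q' : M.Q) (v' : ℕ → ℕ) : Prop :=
  ∃ vd vd' : ℕ → ℕ, v ≤ vd ∧ MStep M q vd w l q' vd' ∧ vd' ≤ v'

/-- A transition whose only possible incrementing error is a faulty decrement, which
leaves the counters unchanged. -/
def FStep {A : Type} (M : CA A) (q : M.Q) (v : ℕ → ℕ) (w : Option A) (l : CInstr)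
    (q' : M.Q) (v' : ℕ → ℕ) : Prop :=
  M.δ q w l q' ∧ (cexec l v v' ∨ ∃ c : ℕ, l = CInstr.dec c ∧ v' = v)

/-- An infinite run of the incrementing counter automaton `M`. -/
def InfRun {A : Type} (M : CA A) (qs : ℕ → M.Q) (vs : ℕ → ℕ → ℕ)
    (ws : ℕ → Option A) (ls : ℕ → CInstr) : Prop :=
  qs 0 = M.qI ∧ vs 0 = (fun _ => 0) ∧
  ∀ i : ℕ, IStep M (qs i) (vs i) (ws i) (ls i) (qs (i + 1)) (vs (i + 1))

/-!
Replay the instructions of the run greedily from the zero valuation, performing each decrement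
only when the counter is positive. By monotonicity of the instructions this replay stays
pointwise below the given run, so every zero test it meets still succeeds, and the only
deviation left is a decrement of a zero counter.
-/

namespace CInstr

/-- On a zero counter `v c - 1` truncates to `0`, so a decrement becomes a faulty no-op. -/
def exec : CInstr → (ℕ → ℕ) → ℕ → ℕ
  | .inc c, v => Function.update v c (v c + 1)
  | .dec c, v => Function.update v c (v c - 1)
  | .ifz _, v => v

theorem exec_mono (l : CInstr) : Monotone l.exec := by
  intro u v huv d
  cases l with
  | inc c | dec c =>
    simp only [exec, Function.update_apply]
    split_ifs with hd
    · have : u c ≤ v c := huv c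
      omega
    · exact huv d
  | ifz c => exact huv d

theorem eq_exec_of_cexec {l : CInstr} {v v' : ℕ → ℕ} (h : cexec l v v') : v' = l.exec v := by
  cases l with
  | inc c => exact h
  | dec c => exact h.2
  | ifz c => exact h.2

end CInstr

section Normalization

variable {A : Type} (M : CA A) {q q' : M.Q} {w : Option A} {l : CInstr} {u v v' : ℕ → ℕ}

theorem IStep.exec_le (hle : u ≤ v) (h : IStep M q v w l q' v') : l.exec u ≤ v' := by
  obtain ⟨vd, vd', hv, ⟨-, hexec⟩, hv'⟩ := h
  calc l.exec u ≤ l.exec vd := l.exec_mono (hle.trans hv)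
    _ = vd' := (CInstr.eq_exec_of_cexec hexec).symm
    _ ≤ v' := hv'

theorem IStep.fStep_exec (hle : u ≤ v) (h : IStep M q v w l q' v') :
    FStep M q u w l q' (l.exec u) := by
  obtain ⟨vd, vd', hv, ⟨hδ, hexec⟩, -⟩ := h
  have hu : u ≤ vd := hle.trans hv
  refine ⟨hδ, ?_⟩
  cases l with
  | inc c => exact Or.inl rfl
  | dec c =>
    by_cases hpos : 0 < u c
    · exact Or.inl ⟨hpos, rfl⟩
    · refine Or.inr ⟨c, rfl, ?_⟩
      simp [CInstr.exec, Nat.eq_zero_of_not_pos hpos]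
  | ifz c => exact Or.inl ⟨Nat.le_zero.mp (hexec.1 ▸ hu c), rfl⟩

def greedyRun (ls : ℕ → CInstr) : ℕ → ℕ → ℕ
  | 0 => 0
  | i + 1 => (ls i).exec (greedyRun ls i)

theorem InfRun.greedyRun_le {qs : ℕ → M.Q} {vs : ℕ → ℕ → ℕ} {ws : ℕ → Option A}
    {ls : ℕ → CInstr} (hrun : InfRun M qs vs ws ls) (i : ℕ) : greedyRun ls i ≤ vs i := by
  induction i with
  | zero => simp [greedyRun, hrun.2.1]
  | succ i ih => exact IStep.exec_le M ih (hrun.2.2 i)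

end Normalization

/-- Every infinite run of an incrementing counter automaton can be normalized: there is a
run over the same input word, visiting the same locations and performing the same
instructions, whose only incrementing errors are faulty decrements that leave the
counters unchanged. -/
theorem incrementingCA_run_normalization {A : Type} (M : CA A)
    (qs : ℕ → M.Q) (vs : ℕ → ℕ → ℕ) (ws : ℕ → Option A) (ls : ℕ → CInstr)
    (hrun : InfRun M qs vs ws ls) :
    ∃ vs' : ℕ → ℕ → ℕ, vs' 0 = (fun _ => 0) ∧
      ∀ i : ℕ, FStep M (qs i) (vs' i) (ws i) (ls i) (qs (i + 1)) (vs' (i + 1)) :=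
  ⟨greedyRun ls, rfl, fun i => IStep.fStep_exec M (hrun.greedyRun_le M i) (hrun.2.2 i)⟩
end

section
/- Nonemptiness for incrementing counter automata over infinite words is in Π⁰₁ (co-recursively enumerable): the set of incrementing counter automata that have no accepting infinite run is recursively enumerable. Specifically, the procedure that repeatedly computes pruned finite reachability trees (stopping each branch at accepting locations or at states dominating an earlier state of the same branch) terminates if and only if the automaton has no accepting infinite run. -/
/-- A witness of non-termination of the forward exploration procedure: an infinite run
with restricted errors (faulty decrements only), together with infinitely many restart
points at accepting locations, such that between consecutive restart points no state
dominates an earlier state of the same segment and no intermediate state is accepting. -/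
def NonTermWitness {A : Type} (M : CA A) : Prop :=
  ∃ (qs : ℕ → M.Q) (vs : ℕ → ℕ → ℕ) (ws : ℕ → Option A) (ls : ℕ → CInstr) (k : ℕ → ℕ),
    qs 0 = M.qI ∧ vs 0 = (fun _ => 0) ∧
    (∀ i : ℕ, FStep M (qs i) (vs i) (ws i) (ls i) (qs (i + 1)) (vs (i + 1))) ∧
    k 0 = 0 ∧ StrictMono k ∧
    (∀ m : ℕ, qs (k (m + 1)) ∈ M.F) ∧
    (∀ m i j : ℕ, k m ≤ i → i < j → j < k (m + 1) →
      ¬ (qs i = qs j ∧ vs i ≤ vs j)) ∧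
    (∀ m i : ℕ, k m < i → i < k (m + 1) → qs i ∉ M.F)

theorem exists_concat_blocks {γ : Type*} (seg : ℕ → ℕ → γ) (len : ℕ → ℕ) (hlen : ∀ m, 0 < len m) :
    ∃ (k : ℕ → ℕ) (x : ℕ → γ), k 0 = 0 ∧ (∀ m, k (m + 1) = k m + len m) ∧
      (∀ i, ∃ m j, j < len m ∧ i = k m + j) ∧ ∀ m j, j < len m → x (k m + j) = seg m j := by
  let k : ℕ → ℕ := fun m => ∑ r ∈ Finset.range m, len r
  have hk : ∀ m, k (m + 1) = k m + len m := fun m => Finset.sum_range_succ len m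
  have hmono : Monotone k := monotone_nat_of_le_succ fun m => by rw [hk]; omega
  have hdecomp : ∀ i, ∃ m j, j < len m ∧ i = k m + j := by
    intro i
    induction i with
    | zero => exact ⟨0, 0, hlen 0, rfl⟩
    | succ i ih =>
      obtain ⟨m, j, hj, rfl⟩ := ih
      by_cases hj' : j + 1 < len m
      · exact ⟨m, j + 1, hj', rfl⟩
      · exact ⟨m + 1, 0, hlen _, by rw [hk]; omega⟩
  have hblock : ∀ m j m' j', j < len m → j' < len m' → k m + j = k m' + j' → m ≤ m' :=
    fun m j m' j' hj _ he => not_lt.1 fun hlt => by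
      have := hmono (Nat.succ_le_of_lt hlt)
      rw [hk] at this
      omega
  choose blk off hoff hi using hdecomp
  refine ⟨k, fun i => seg (blk i) (off i), rfl, hk, fun i => ⟨blk i, off i, hoff i, hi i⟩, ?_⟩
  intro m j hj
  have he := hi (k m + j)
  have hm : blk (k m + j) = m :=
    le_antisymm (hblock _ _ _ _ (hoff _) hj he.symm) (hblock _ _ _ _ hj (hoff _) he)
  rw [hm] at he
  simp only [hm, show off (k m + j) = j by omega]

section Generic

variable {Q V L : Type*}

/-- A sequence of configurations `(qs i, vs i)`; `ls i` labels the step from `i` to `i + 1`. -/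
structure ConfSeq (Q V L : Type*) where
  qs : ℕ → Q
  vs : ℕ → V
  ls : ℕ → L

namespace ConfSeq

variable (P : ConfSeq Q V L)

def start : Q × V := (P.qs 0, P.vs 0)

def shift (t : ℕ) : ConfSeq Q V L :=
  ⟨fun i => P.qs (t + i), fun i => P.vs (t + i), fun i => P.ls (t + i)⟩

def IsPath (step : Q → V → L → Q → V → Prop) : Prop :=
  ∀ i, step (P.qs i) (P.vs i) (P.ls i) (P.qs (i + 1)) (P.vs (i + 1))

def IsAcceptingPath (step : Q → V → L → Q → V → Prop) (F : Set Q) : Prop :=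
  P.IsPath step ∧ ∀ N, ∃ i, N ≤ i ∧ P.qs i ∈ F

section Segment

variable [LE V]

def Undominated (p t : ℕ) : Prop :=
  ∀ i j, p ≤ i → i < j → j < t → ¬ (P.qs i = P.qs j ∧ P.vs i ≤ P.vs j)

def IsCleanSegment (F : Set Q) (p t : ℕ) : Prop :=
  p < t ∧ P.qs t ∈ F ∧ P.Undominated p t ∧ ∀ i, p < i → i < t → P.qs i ∉ F

end Segment

theorem IsAcceptingPath.shift {step : Q → V → L → Q → V → Prop} {F : Set Q}
    {P : ConfSeq Q V L} (hP : P.IsAcceptingPath step F) (t : ℕ) :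
    (P.shift t).IsAcceptingPath step F := by
  refine ⟨fun i => hP.1 (t + i), fun N => ?_⟩
  obtain ⟨i, hi, hF⟩ := hP.2 (t + N)
  refine ⟨i - t, by omega, ?_⟩
  show P.qs (t + (i - t)) ∈ F
  rwa [show t + (i - t) = i by omega]

theorem IsCleanSegment.of_eq_add [LE V] {F : Set Q} {C R : ConfSeq Q V L} {p t : ℕ}
    (h : C.IsCleanSegment F 0 t) (hRC : ∀ j ≤ t, R.qs (p + j) = C.qs j ∧ R.vs (p + j) = C.vs j) :
    R.IsCleanSegment F p (p + t) := by
  obtain ⟨ht, htF, hdom, hnF⟩ := h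
  have hRC' : ∀ i, p ≤ i → i ≤ p + t → R.qs i = C.qs (i - p) ∧ R.vs i = C.vs (i - p) :=
    fun i h1 h2 => by simpa [Nat.add_sub_cancel' h1] using hRC (i - p) (by omega)
  refine ⟨by omega, (hRC t le_rfl).1 ▸ htF, fun i j hi hij hj => ?_, fun i hi hit => ?_⟩
  · rw [(hRC' i hi (by omega)).1, (hRC' i hi (by omega)).2, (hRC' j (by omega) (by omega)).1,
      (hRC' j (by omega) (by omega)).2]
    exact hdom (i - p) (j - p) (Nat.zero_le _) (by omega) (by omega)
  · rw [(hRC' i hi.le (by omega)).1]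
    exact hnF (i - p) (by omega) (by omega)

end ConfSeq

section DownwardCompatible

variable [Preorder V]

def DownwardCompatible (step : Q → V → L → Q → V → Prop) : Prop :=
  ∀ ⦃q v l q' v' u⦄, step q v l q' v' → u ≤ v → ∃ u' ≤ v', step q u l q' u'

def Incrementing (step : Q → V → L → Q → V → Prop) (q : Q) (v : V) (l : L) (q' : Q) (v' : V) :
    Prop :=
  ∃ w w', v ≤ w ∧ step q w l q' w' ∧ w' ≤ v'

variable {step : Q → V → L → Q → V → Prop}

theorem Incrementing.of_step {q : Q} {v : V} {l : L} {q' : Q} {v' : V}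
    (h : step q v l q' v') : Incrementing step q v l q' v' :=
  ⟨v, v', le_rfl, h, le_rfl⟩

theorem DownwardCompatible.incrementing (hstep : DownwardCompatible step) {q : Q} {v : V} {l : L}
    {q' : Q} {v' u : V} (h : Incrementing step q v l q' v') (hu : u ≤ v) :
    ∃ u' ≤ v', step q u l q' u' := by
  obtain ⟨w, w', hvw, hw, hw'⟩ := h
  obtain ⟨u', hu', hstep'⟩ := hstep hw (hu.trans hvw)
  exact ⟨u', hu'.trans hw', hstep'⟩

theorem ConfSeq.IsPath.exists_of_incrementing (hstep : DownwardCompatible step)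
    {P : ConfSeq Q V L} (hP : P.IsPath (Incrementing step)) {u : V} (hu : u ≤ P.vs 0) :
    ∃ us : ℕ → V, us 0 = u ∧ ConfSeq.IsPath ⟨P.qs, us, P.ls⟩ step := by
  have hsim : ∀ i (v : {v // v ≤ P.vs i}), ∃ v' : {v' // v' ≤ P.vs (i + 1)},
      step (P.qs i) v (P.ls i) (P.qs (i + 1)) v' := fun i v => by
    obtain ⟨v', hv', h⟩ := hstep.incrementing (hP i) v.2
    exact ⟨⟨v', hv'⟩, h⟩
  choose next hnext using hsim
  let us : (i : ℕ) → {v // v ≤ P.vs i} :=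
    fun i => Nat.rec (motive := fun i => {v // v ≤ P.vs i}) ⟨u, hu⟩ next i
  exact ⟨fun i => us i, rfl, fun i => hnext i (us i)⟩

def skipIndex (a b i : ℕ) : ℕ := if i < a then i else i + (b - a)

theorem ConfSeq.IsPath.exists_cut_loop (hstep : DownwardCompatible step) {P : ConfSeq Q V L}
    (hP : P.IsPath step) {a b : ℕ} (hab : a < b) (hq : P.qs a = P.qs b) (hv : P.vs a ≤ P.vs b) :
    ∃ us : ℕ → V, us 0 = P.vs 0 ∧
      ConfSeq.IsPath ⟨fun i => P.qs (skipIndex a b i), us, fun i => P.ls (skipIndex a b i)⟩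
        step := by
  have hinc : ConfSeq.IsPath ⟨fun i => P.qs (skipIndex a b i), fun i => P.vs (skipIndex a b i),
      fun i => P.ls (skipIndex a b i)⟩ (Incrementing step) := by
    -- at the junction, the step into position `a` ends below the configuration at `b`
    intro i
    simp only [skipIndex]
    rcases lt_trichotomy (i + 1) a with h | rfl | h
    · rw [if_pos (by omega), if_pos h]
      exact .of_step (hP i)
    · rw [if_pos (by omega), if_neg (lt_irrefl _), show i + 1 + (b - (i + 1)) = b by omega]
      exact ⟨P.vs i, P.vs (i + 1), le_rfl, hq ▸ hP i, hv⟩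
    · rw [if_neg (by omega), if_neg (by omega), show i + 1 + (b - a) = i + (b - a) + 1 by omega]
      exact .of_step (hP _)
  refine hinc.exists_of_incrementing hstep ?_
  rcases Nat.eq_zero_or_pos a with rfl | ha
  · simpa [skipIndex] using hv
  · simp [skipIndex, ha]

theorem ConfSeq.IsAcceptingPath.exists_undominated (hstep : DownwardCompatible step) {F : Set Q}
    (t : ℕ) : ∀ {P : ConfSeq Q V L}, P.IsAcceptingPath step F → 0 < t → P.qs t ∈ F →
      ∃ P' : ConfSeq Q V L, P'.IsAcceptingPath step F ∧ P'.start = P.start ∧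
        ∃ t', 0 < t' ∧ P'.qs t' ∈ F ∧ P'.Undominated 0 t' := by
  induction t using Nat.strong_induction_on with
  | _ t ih =>
  intro P hP ht htF
  by_cases hdom : P.Undominated 0 t
  · exact ⟨P, hP, rfl, t, ht, htF, hdom⟩
  simp only [ConfSeq.Undominated, not_forall, not_not, exists_prop] at hdom
  obtain ⟨a, b, -, hab, hbt, hq, hv⟩ := hdom
  obtain ⟨us, hus0, hpath⟩ := hP.1.exists_cut_loop hstep hab hq hv
  set P' : ConfSeq Q V L := ⟨fun i => P.qs (skipIndex a b i), us, fun i => P.ls (skipIndex a b i)⟩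
  have hskip : ∀ i, a ≤ i → P'.qs i = P.qs (i + (b - a)) := fun i hi =>
    congrArg P.qs (if_neg (by omega))
  have hP' : P'.IsAcceptingPath step F := by
    refine ⟨hpath, fun N => ?_⟩
    obtain ⟨i, hi, hF⟩ := hP.2 (N + b)
    refine ⟨i - (b - a), by omega, ?_⟩
    rwa [hskip _ (by omega), show i - (b - a) + (b - a) = i by omega]
  have hstart : P'.start = P.start := by
    refine Prod.ext ?_ hus0
    rcases Nat.eq_zero_or_pos a with rfl | ha
    · simpa [P', ConfSeq.start, skipIndex] using hq.symm
    · simp [P', ConfSeq.start, skipIndex, ha]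
  obtain ⟨P'', hP'', hstart', hrest⟩ := ih (t - (b - a)) (by omega) hP' (by omega)
    (by rwa [hskip _ (by omega), show t - (b - a) + (b - a) = t by omega])
  exact ⟨P'', hP'', hstart'.trans hstart, hrest⟩

theorem ConfSeq.IsAcceptingPath.exists_cleanSegment (hstep : DownwardCompatible step)
    {F : Set Q} {P : ConfSeq Q V L} (hP : P.IsAcceptingPath step F) :
    ∃ P' : ConfSeq Q V L, P'.IsAcceptingPath step F ∧ P'.start = P.start ∧
      ∃ t, P'.IsCleanSegment F 0 t := by
  classical
  obtain ⟨t, ht, htF⟩ := hP.2 1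
  obtain ⟨P', hP', hstart, t', ht', ht'F, hdom⟩ := hP.exists_undominated hstep t ht htF
  have hex : ∃ t, 0 < t ∧ P'.qs t ∈ F := ⟨t', ht', ht'F⟩
  obtain ⟨hpos, hF⟩ := Nat.find_spec hex
  refine ⟨P', hP', hstart, Nat.find hex, hpos, hF, fun i j hi hij hj => ?_, fun i hi hit hiF => ?_⟩
  · exact hdom i j hi hij (hj.trans_le (Nat.find_min' hex ⟨ht', ht'F⟩))
  · exact Nat.find_min hex hit ⟨hi, hiF⟩

theorem ConfSeq.IsAcceptingPath.exists_cleanSegments (hstep : DownwardCompatible step)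
    {F : Set Q} {P : ConfSeq Q V L} (hP : P.IsAcceptingPath step F) :
    ∃ (R : ConfSeq Q V L) (k : ℕ → ℕ), R.IsPath step ∧ R.start = P.start ∧ k 0 = 0 ∧
      ∀ m, R.IsCleanSegment F (k m) (k (m + 1)) := by
  let Acc := {P : ConfSeq Q V L // P.IsAcceptingPath step F}
  have hclean : ∀ P : Acc, ∃ (C : Acc) (t : ℕ), C.1.start = P.1.start ∧ C.1.IsCleanSegment F 0 t :=
    fun P => by
      obtain ⟨C, hC, hstart, t, ht⟩ := P.2.exists_cleanSegment hstep
      exact ⟨⟨C, hC⟩, t, hstart, ht⟩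
  choose clean len hstart hseg using hclean
  -- block `m` is the clean prefix of `C m`; the path cleaned next is the suffix of `C m` after it
  let next : Acc → Acc := fun P => ⟨(clean P).1.shift (len P), (clean P).2.shift (len P)⟩
  let C : ℕ → ConfSeq Q V L := fun m => (clean (next^[m] ⟨P, hP⟩)).1
  let t : ℕ → ℕ := fun m => len (next^[m] ⟨P, hP⟩)
  have hjoin : ∀ m, (C (m + 1)).start = ((C m).qs (t m), (C m).vs (t m)) := fun m => by
    simp only [C, t, hstart, Function.iterate_succ_apply']
    rfl
  obtain ⟨k, x, hk0, hk, hdecomp, hx⟩ :=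
    exists_concat_blocks (fun m j => ((C m).qs j, (C m).vs j, (C m).ls j)) t fun m => (hseg _).1
  let R : ConfSeq Q V L := ⟨fun i => (x i).1, fun i => (x i).2.1, fun i => (x i).2.2⟩
  have hRC : ∀ m, ∀ j ≤ t m, R.qs (k m + j) = (C m).qs j ∧ R.vs (k m + j) = (C m).vs j := by
    intro m j hj
    rcases hj.lt_or_eq with hj | rfl
    · simp [R, hx m j hj]
    · have h := hx (m + 1) 0 (hseg _).1
      rw [hk, add_zero] at h
      simpa [R, h, ConfSeq.start] using hjoin m
  refine ⟨R, k, fun i => ?_, ?_, hk0, fun m => ?_⟩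
  · obtain ⟨m, j, hj, rfl⟩ := hdecomp i
    have hl : R.ls (k m + j) = (C m).ls j := by simp [R, hx m j hj]
    rw [show k m + j + 1 = k m + (j + 1) from rfl, (hRC m j hj.le).1, (hRC m j hj.le).2, hl,
      (hRC m (j + 1) hj).1, (hRC m (j + 1) hj).2]
    exact (clean _).2.1 j
  · have h := hRC 0 0 (Nat.zero_le _)
    rw [hk0] at h
    exact (Prod.ext h.1 h.2).trans (hstart ⟨P, hP⟩)
  · rw [hk]
    exact (hseg _).of_eq_add (hRC m)

end DownwardCompatible

end Generic

section IncrementingCA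

open Function

variable {A : Type} {M : CA A}

def CA.fstep (M : CA A) (q : M.Q) (v : ℕ → ℕ) (wl : Option A × CInstr) (q' : M.Q)
    (v' : ℕ → ℕ) : Prop :=
  FStep M q v wl.1 wl.2 q' v'

theorem FStep.exists_le_of_le {q q' : M.Q} {v v' u : ℕ → ℕ} {w : Option A} {l : CInstr}
    (h : FStep M q v w l q' v') (hu : u ≤ v) : ∃ u' ≤ v', FStep M q u w l q' u' := by
  obtain ⟨hδ, hc | ⟨c, rfl, rfl⟩⟩ := h
  · cases l with
    | inc c =>
      obtain rfl : v' = update v c (v c + 1) := hc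
      exact ⟨update u c (u c + 1), update_le_update_iff.2 ⟨Nat.add_le_add_right (hu c) 1,
        fun j _ => hu j⟩, hδ, Or.inl rfl⟩
    | dec c =>
      obtain ⟨-, rfl⟩ := hc
      by_cases huc : 0 < u c
      · exact ⟨update u c (u c - 1), update_le_update_iff.2 ⟨Nat.sub_le_sub_right (hu c) 1,
          fun j _ => hu j⟩, hδ, Or.inl ⟨huc, rfl⟩⟩
      · exact ⟨u, le_update_iff.2 ⟨by omega, fun j _ => hu j⟩, hδ, Or.inr ⟨c, rfl, rfl⟩⟩
    | ifz c =>
      obtain ⟨hz, rfl⟩ := hc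
      exact ⟨u, hu, hδ, Or.inl ⟨Nat.le_zero.1 (hz ▸ hu c), rfl⟩⟩
  · exact ⟨u, hu, hδ, Or.inr ⟨c, rfl, rfl⟩⟩

theorem CA.downwardCompatible_fstep (M : CA A) : DownwardCompatible M.fstep :=
  fun _ _ _ _ _ _ h hu => FStep.exists_le_of_le h hu

theorem FStep.istep {q q' : M.Q} {v v' : ℕ → ℕ} {w : Option A} {l : CInstr}
    (h : FStep M q v w l q' v') : IStep M q v w l q' v' := by
  obtain ⟨hδ, hc | ⟨c, rfl, hv⟩⟩ := h
  · exact ⟨v, v', le_rfl, ⟨hδ, hc⟩, le_rfl⟩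
  · -- a faulty decrement is an increment error followed by an exact decrement
    rw [hv]
    exact ⟨update v c (v c + 1), v, le_update_iff.2 ⟨by omega, fun _ _ => le_rfl⟩,
      ⟨hδ, by simp [cexec]⟩, le_rfl⟩

theorem IStep.incrementing_fstep {q q' : M.Q} {v v' : ℕ → ℕ} {w : Option A} {l : CInstr}
    (h : IStep M q v w l q' v') : Incrementing M.fstep q v (w, l) q' v' :=
  let ⟨vd, vd', hle, ⟨hδ, hc⟩, hle'⟩ := h
  ⟨vd, vd', hle, ⟨hδ, Or.inl hc⟩, hle'⟩

end IncrementingCA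

/-- Correctness of the procedure witnessing Π⁰₁-membership of nonemptiness for
incrementing counter automata over infinite words: the forward exploration procedure
fails to terminate iff the automaton has an accepting infinite run (Büchi condition).
Hence the procedure terminates iff the infinite-word language is empty, so the
complement of nonemptiness is recursively enumerable. -/
theorem incrementingCA_procedure_nontermination_iff_accepting_run {A : Type} (M : CA A) :
    NonTermWitness M ↔
      ∃ (qs : ℕ → M.Q) (vs : ℕ → ℕ → ℕ) (ws : ℕ → Option A) (ls : ℕ → CInstr),
        InfRun M qs vs ws ls ∧ ∀ N : ℕ, ∃ i : ℕ, N ≤ i ∧ qs i ∈ M.F := by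
  constructor
  · rintro ⟨qs, vs, ws, ls, k, hq0, hv0, hstep, -, hk, hkF, -, -⟩
    exact ⟨qs, vs, ws, ls, ⟨hq0, hv0, fun i => (hstep i).istep⟩,
      fun N => ⟨k (N + 1), (Nat.le_succ N).trans hk.le_apply, hkF N⟩⟩
  · rintro ⟨qs, vs, ws, ls, ⟨hq0, hv0, hrun⟩, hF⟩
    let P : ConfSeq M.Q (ℕ → ℕ) (Option A × CInstr) := ⟨qs, vs, fun i => (ws i, ls i)⟩
    obtain ⟨us, hus0, hpath⟩ := ConfSeq.IsPath.exists_of_incrementing M.downwardCompatible_fstep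
      (P := P) (fun i => (hrun i).incrementing_fstep) le_rfl
    obtain ⟨R, k, hR, hstart, hk0, hclean⟩ :=
      ConfSeq.IsAcceptingPath.exists_cleanSegments M.downwardCompatible_fstep ⟨hpath, hF⟩
    refine ⟨R.qs, R.vs, fun i => (R.ls i).1, fun i => (R.ls i).2, k,
      (congrArg Prod.fst hstart).trans hq0, (congrArg Prod.snd hstart).trans (hus0.trans hv0), hR,
      hk0, strictMono_nat_of_lt_succ fun m => (hclean m).1, fun m => (hclean m).2.1,
      fun m => (hclean m).2.2.1, fun m => (hclean m).2.2.2⟩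
end

section
/- The product rank assignment used for intersecting weak automata is correct: the function (m, k) ↦ (m+1)(k+1)+1 on ℕ × ℕ is even iff both m and k are even, and is monotone in each argument; consequently, if ranks ρ₁ and ρ₂ are non-increasing along transitions of A₁ and A₂, then ρ(⟨q₁,q₂⟩) = (ρ₁(q₁)+1)(ρ₂(q₂)+1)+1 is non-increasing along transitions of the product automaton, and an infinite play of the product acceptance game has even limit rank iff its projections have even limit ranks in both components. -/
/-! `(m+1)(k+1)+1` is even exactly when both factors `m+1`, `k+1` are odd. For the limit: if the
product of the positive non-increasing factors `f j + 1` and `g j + 1` stays constant from `N` on,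
neither factor can drop below its value at `N`, so both sequences are constant from `N` on;
conversely, sequences constant from `N₁` and `N₂` on are jointly constant from `max N₁ N₂` on. -/

def HasEvenLimit (h : ℕ → ℕ) : Prop :=
  ∃ N, (∀ j, N ≤ j → h j = h N) ∧ h N % 2 = 0

theorem productRank_even_iff (m k : ℕ) :
    ((m + 1) * (k + 1) + 1) % 2 = 0 ↔ m % 2 = 0 ∧ k % 2 = 0 := by
  simp only [← Nat.even_iff, Nat.even_add_one, Nat.even_mul]
  tauto

theorem productRank_mono {m m' k k' : ℕ} (hm : m ≤ m') (hk : k ≤ k') :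
    (m + 1) * (k + 1) + 1 ≤ (m' + 1) * (k' + 1) + 1 := by
  gcongr

theorem eq_and_eq_of_productRank_eq {m m' k k' : ℕ} (hm : m' ≤ m) (hk : k' ≤ k)
    (h : (m' + 1) * (k' + 1) + 1 = (m + 1) * (k + 1) + 1) : m' = m ∧ k' = k := by
  have h' := (mul_eq_mul_iff_eq_and_eq_of_pos (Nat.succ_le_succ hm) (Nat.succ_le_succ hk)
    m'.succ_pos k.succ_pos).mp (Nat.add_right_cancel h)
  omega

theorem hasEvenLimit_productRank_iff {f g : ℕ → ℕ} (hf : Antitone f) (hg : Antitone g) :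
    HasEvenLimit (fun i => (f i + 1) * (g i + 1) + 1) ↔ HasEvenLimit f ∧ HasEvenLimit g := by
  constructor
  · rintro ⟨N, hconst, heven⟩
    have hfg (j : ℕ) (hj : N ≤ j) : f j = f N ∧ g j = g N :=
      eq_and_eq_of_productRank_eq (hf hj) (hg hj) (hconst j hj)
    obtain ⟨hfN, hgN⟩ := (productRank_even_iff (f N) (g N)).mp heven
    exact ⟨⟨N, fun j hj => (hfg j hj).1, hfN⟩, ⟨N, fun j hj => (hfg j hj).2, hgN⟩⟩
  · rintro ⟨⟨N₁, hf₁, hfN₁⟩, ⟨N₂, hg₂, hgN₂⟩⟩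
    have hfM : f (max N₁ N₂) = f N₁ := hf₁ _ (le_max_left _ _)
    have hgM : g (max N₁ N₂) = g N₂ := hg₂ _ (le_max_right _ _)
    refine ⟨max N₁ N₂, fun j hj => ?_, ?_⟩
    · dsimp only
      rw [hfM, hgM, hf₁ j (le_of_max_le_left hj), hg₂ j (le_of_max_le_right hj)]
    · rw [productRank_even_iff, hfM, hgM]
      exact ⟨hfN₁, hgN₂⟩

/-- Correctness of the product rank assignment `(m, k) ↦ (m+1)(k+1)+1` used for
intersecting weak automata: it is even iff both arguments are even; it is monotone in
each argument, so it is non-increasing along any pair of non-increasing rank sequences;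
and the limit of the combined sequence is even iff the limits of both projections are
even. -/
theorem productRank_correct :
    (∀ m k : ℕ, ((m + 1) * (k + 1) + 1) % 2 = 0 ↔ (m % 2 = 0 ∧ k % 2 = 0)) ∧
    (∀ m m' k k' : ℕ, m ≤ m' → k ≤ k' →
      (m + 1) * (k + 1) + 1 ≤ (m' + 1) * (k' + 1) + 1) ∧
    (∀ f g : ℕ → ℕ, (∀ i, f (i + 1) ≤ f i) → (∀ i, g (i + 1) ≤ g i) →
      (∀ i, (f (i + 1) + 1) * (g (i + 1) + 1) + 1 ≤ (f i + 1) * (g i + 1) + 1) ∧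
      ((∃ N, (∀ j, N ≤ j →
            (f j + 1) * (g j + 1) + 1 = (f N + 1) * (g N + 1) + 1) ∧
          ((f N + 1) * (g N + 1) + 1) % 2 = 0) ↔
        ((∃ N, (∀ j, N ≤ j → f j = f N) ∧ f N % 2 = 0) ∧
         (∃ N, (∀ j, N ≤ j → g j = g N) ∧ g N % 2 = 0)))) :=
  ⟨productRank_even_iff, fun _ _ _ _ => productRank_mono, fun _ _ hf hg =>
    ⟨fun i => productRank_mono (hf i) (hg i),
      hasEvenLimit_productRank_iff (antitone_nat_of_succ_le hf) (antitone_nat_of_succ_le hg)⟩⟩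
end

section
/- Simple LTL↓₁(𝒪_m) translates to two-variable first-order logic: for each sentence φ of simple LTL with one register and operators 𝒪_m, the translation T_j defined by T_j(a) = P_a(x_j), T_j(↑₁) = x_{1−j} ∼ x_j, T_j(𝖮^k ψ) = ∃x_{1−j}(χ^j_k ∧ T_{1−j}(ψ)) (commuting with Boolean connectives) yields a formula of FO²(∼, <, +1, …, +m) with at most x_j free that is equivalent to φ: for every data word σ over Σ and every position 0 ≤ i < |σ|, σ, i ⊨_∅ φ iff σ ⊨_{[x_j ↦ i]} T_j(φ). -/
open scoped Classical

/-- A data word: a nonempty (finite or infinite) word together with an equivalence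
relation on its positions. Positions are `i` with `(i : ℕ∞) < len`. -/
structure DataWord (A : Type) where
  len : ℕ∞
  len_pos : 0 < len
  letter : ℕ → A
  sim : ℕ → ℕ → Prop
  sim_refl : ∀ i : ℕ, (i : ℕ∞) < len → sim i i
  sim_symm : ∀ i j : ℕ, sim i j → sim j i
  sim_trans : ∀ i j k : ℕ, sim i j → sim j k → sim i k

def DataWord.IsFinite {A : Type} (σ : DataWord A) : Prop := σ.len ≠ ⊤
def DataWord.IsInfinite {A : Type} (σ : DataWord A) : Prop := σ.len = ⊤
/-- The class of position `i`. -/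
def DataWord.cls {A : Type} (σ : DataWord A) (i : ℕ) : Set ℕ := {j | σ.sim i j}

/-- Two-variable first-order logic over data words: the two variables are indexed by
`Bool`; atomic predicates are letter tests, data equivalence `∼`, order `<`, and
offsets `x = y + k`. -/
inductive FO2 (A : Type) where
  | pa (a : A) (x : Bool)
  | sim (x y : Bool)
  | lt (x y : Bool)
  | plus (x y : Bool) (k : ℕ)
  | neg (φ : FO2 A)
  | and (φ ψ : FO2 A)
  | ex (x : Bool) (φ : FO2 A)

/-- First-order satisfaction over data words; quantifiers range over word positions. -/
def fosat {A : Type} (σ : DataWord A) : FO2 A → (Bool → ℕ) → Prop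
  | .pa a x, e => σ.letter (e x) = a
  | .sim x y, e => σ.sim (e x) (e y)
  | .lt x y, e => e x < e y
  | .plus x y k, e => e x = e y + k
  | .neg φ, e => ¬ fosat σ φ e
  | .and φ ψ, e => fosat σ φ e ∧ fosat σ ψ e
  | .ex x φ, e => ∃ i : ℕ, (i : ℕ∞) < σ.len ∧ fosat σ φ (Function.update e x i)

/-- The formula only uses offset predicates `+k` with `1 ≤ k ≤ m`. -/
def FO2.offsetsLE {A : Type} (m : ℕ) : FO2 A → Prop
  | .plus _ _ k => 1 ≤ k ∧ k ≤ m
  | .neg φ => φ.offsetsLE m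
  | .and φ ψ => φ.offsetsLE m ∧ ψ.offsetsLE m
  | .ex _ φ => φ.offsetsLE m
  | _ => True

/-- Free variables of a two-variable formula. -/
def FO2.freeVars {A : Type} : FO2 A → Set Bool
  | .pa _ x => {x}
  | .sim x y | .lt x y | .plus x y _ => {x, y}
  | .neg φ => φ.freeVars
  | .and φ ψ => φ.freeVars ∪ ψ.freeVars
  | .ex x φ => φ.freeVars \ {x}

/-- Simple LTL↓₁(𝒪ₘ): one register, and each temporal operator `𝖮ᵏ` (for `|k| ≤ m+1`)
is the freeze quantifier `↓₁` immediately followed by `Xᵏ` (for `|k| ≤ m`), by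
`X^{m+1}F` (for `k = m+1`), or by `X^{-(m+1)}F⁻¹` (for `k = -(m+1)`). -/
inductive SLTL (A : Type) where
  | atom (a : A)
  | tt
  | up
  | neg (φ : SLTL A)
  | and (φ ψ : SLTL A)
  | op (k : ℤ) (φ : SLTL A)

/-- Satisfaction of simple formulas; the single register holds an optional class. -/
def ssat {A : Type} (m : ℕ) (σ : DataWord A) : SLTL A → ℕ → Option (Set ℕ) → Prop
  | .atom a, i, _ => σ.letter i = a
  | .tt, _, _ => True
  | .up, i, v => ∃ C, v = some C ∧ i ∈ C
  | .neg φ, i, v => ¬ ssat m σ φ i v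
  | .and φ ψ, i, v => ssat m σ φ i v ∧ ssat m σ ψ i v
  | .op k φ, i, _ =>
      if k = (m : ℤ) + 1 then
        ∃ j : ℕ, i + m + 1 ≤ j ∧ (j : ℕ∞) < σ.len ∧ ssat m σ φ j (some (σ.cls i))
      else if k = -((m : ℤ) + 1) then
        ∃ j : ℕ, j + m + 1 ≤ i ∧ ssat m σ φ j (some (σ.cls i))
      else
        ∃ j : ℕ, (j : ℤ) = (i : ℤ) + k ∧ (j : ℕ∞) < σ.len ∧
          ssat m σ φ j (some (σ.cls i))

/-- Well-formedness for 𝒪ₘ: every operator `𝖮ᵏ` has `|k| ≤ m + 1`. -/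
def SLTL.wf {A : Type} (m : ℕ) : SLTL A → Prop
  | .op k φ => k.natAbs ≤ m + 1 ∧ φ.wf m
  | .neg φ => φ.wf m
  | .and φ ψ => φ.wf m ∧ ψ.wf m
  | _ => True

/-- Sentences: no free occurrence of the register test `↑₁` (every occurrence is in the
scope of some `𝖮ᵏ`, whose leading `↓₁` binds it). -/
def SLTL.closed {A : Type} : SLTL A → Prop
  | .up => False
  | .neg φ => φ.closed
  | .and φ ψ => φ.closed ∧ ψ.closed
  | .op _ _ => True
  | _ => True

/-- Equality of variables, expressed using `<`. -/
def varE {A : Type} (x y : Bool) : FO2 A :=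
  FO2.and (FO2.neg (FO2.lt x y)) (FO2.neg (FO2.lt y x))

/-- The guard `χʲₖ` describing the order type between `x_j` and `x_{1-j}`. -/
def chi {A : Type} (m : ℕ) (j : Bool) (k : ℤ) : FO2 A :=
  if k = 0 then varE (!j) j
  else if 0 < k ∧ k ≤ (m : ℤ) then FO2.plus (!j) j k.natAbs
  else if -(m : ℤ) ≤ k ∧ k < 0 then FO2.plus j (!j) k.natAbs
  else if k = (m : ℤ) + 1 then
    (List.range m).foldr
      (fun k' acc => FO2.and (FO2.neg (FO2.plus (!j) j (k' + 1))) acc)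
      (FO2.lt j (!j))
  else
    (List.range m).foldr
      (fun k' acc => FO2.and (FO2.neg (FO2.plus j (!j) (k' + 1))) acc)
      (FO2.lt (!j) j)

/-- The translation `T_j` from simple LTL↓₁(𝒪ₘ) to FO²(∼, <, +1, …, +m). -/
def transSL {A : Type} (m : ℕ) : SLTL A → Bool → FO2 A
  | .atom a, j => FO2.pa a j
  | .tt, j => FO2.neg (FO2.lt j j)
  | .up, j => FO2.sim (!j) j
  | .neg φ, j => FO2.neg (transSL m φ j)
  | .and φ ψ, j => FO2.and (transSL m φ j) (transSL m ψ j)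
  | .op k φ, j => FO2.ex (!j) (FO2.and (chi m j k) (transSL m φ (!j)))

namespace SLTL

variable {A : Type}

def Reach (m : ℕ) (k : ℤ) (i a : ℕ) : Prop :=
  if k = (m : ℤ) + 1 then i + m + 1 ≤ a
  else if k = -((m : ℤ) + 1) then a + m + 1 ≤ i
  else (a : ℤ) = i + k

theorem ssat_op_iff {m : ℕ} {σ : DataWord A} {k : ℤ} {φ : SLTL A} {i : ℕ}
    (hi : (i : ℕ∞) < σ.len) (v : Option (Set ℕ)) :
    ssat m σ (.op k φ) i v ↔
      ∃ a : ℕ, (a : ℕ∞) < σ.len ∧ Reach m k i a ∧ ssat m σ φ a (some (σ.cls i)) := by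
  rw [ssat]
  unfold Reach
  split_ifs
  · exact exists_congr fun _ => and_left_comm
  · exact ⟨fun ⟨a, ha, h⟩ => ⟨a, lt_of_le_of_lt (by exact_mod_cast (by omega : a ≤ i)) hi, ha, h⟩,
      fun ⟨a, _, ha, h⟩ => ⟨a, ha, h⟩⟩
  · exact exists_congr fun _ => and_left_comm

theorem ssat_congr_of_closed {m : ℕ} {σ : DataWord A} {φ : SLTL A} (hcl : φ.closed) (i : ℕ)
    (v v' : Option (Set ℕ)) : ssat m σ φ i v ↔ ssat m σ φ i v' := by
  induction φ with
  | up => exact hcl.elim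
  | neg φ ih => exact not_congr (ih hcl)
  | and φ ψ ihφ ihψ => exact and_congr (ihφ hcl.1) (ihψ hcl.2)
  | _ => exact Iff.rfl

end SLTL

namespace FO2

variable {A : Type}

theorem fosat_foldr_neg_plus (σ : DataWord A) (x y : Bool) (base : FO2 A) (l : List ℕ)
    (e : Bool → ℕ) :
    fosat σ (l.foldr (fun k acc => .and (.neg (.plus x y (k + 1))) acc) base) e ↔
      (∀ k ∈ l, e x ≠ e y + (k + 1)) ∧ fosat σ base e := by
  induction l with
  | nil => simp
  | cons a l ih => simp only [List.foldr_cons, fosat, ih, List.forall_mem_cons, and_assoc, ne_eq]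

theorem offsetsLE_foldr_range_neg_plus (m : ℕ) (x y : Bool) {base : FO2 A}
    (hbase : base.offsetsLE m) :
    ((List.range m).foldr (fun k acc => .and (.neg (.plus x y (k + 1))) acc) base).offsetsLE m := by
  suffices ∀ l : List ℕ, (∀ k ∈ l, k < m) →
      (l.foldr (fun k acc => .and (.neg (.plus x y (k + 1))) acc) base).offsetsLE m from
    this _ fun _ => List.mem_range.mp
  intro l hl
  induction l with
  | nil => exact hbase
  | cons a l ih =>
    exact ⟨⟨by omega, hl a List.mem_cons_self⟩, ih fun k hk => hl k (List.mem_cons_of_mem a hk)⟩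

end FO2

variable {A : Type}

theorem chi_offsetsLE {m : ℕ} (j : Bool) {k : ℤ} (hk : k.natAbs ≤ m + 1) :
    (chi (A := A) m j k).offsetsLE m := by
  unfold chi
  split_ifs
  · exact ⟨trivial, trivial⟩
  · exact ⟨by omega, by omega⟩
  · exact ⟨by omega, by omega⟩
  · exact FO2.offsetsLE_foldr_range_neg_plus m _ _ trivial
  · exact FO2.offsetsLE_foldr_range_neg_plus m _ _ trivial

theorem lt_and_forall_ne_add_succ_iff {a b m : ℕ} :
    ((∀ k ∈ List.range m, b ≠ a + (k + 1)) ∧ a < b) ↔ a + m + 1 ≤ b := by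
  simp only [List.mem_range]
  refine ⟨fun ⟨hne, hlt⟩ => ?_, fun h => ⟨fun k hk => by omega, by omega⟩⟩
  by_contra! hb
  exact hne (b - a - 1) (by omega) (by omega)

theorem fosat_chi_iff {m : ℕ} (σ : DataWord A) (j : Bool) {k : ℤ} (hk : k.natAbs ≤ m + 1)
    (e : Bool → ℕ) : fosat σ (chi m j k) e ↔ SLTL.Reach m k (e j) (e !j) := by
  unfold chi SLTL.Reach
  split_ifs <;>
    simp only [varE, fosat, FO2.fosat_foldr_neg_plus, lt_and_forall_ne_add_succ_iff] <;> omega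

theorem transSL_offsetsLE {m : ℕ} {φ : SLTL A} (hwf : φ.wf m) (j : Bool) :
    (transSL m φ j).offsetsLE m := by
  induction φ generalizing j with
  | neg φ ih => exact ih hwf j
  | and φ ψ ihφ ihψ => exact ⟨ihφ hwf.1 j, ihψ hwf.2 j⟩
  | op k φ ih => exact ⟨chi_offsetsLE j hwf.1, ih hwf.2 !j⟩
  | _ => trivial

theorem transSL_freeVars_subset {m : ℕ} {φ : SLTL A} (hcl : φ.closed) (j : Bool) :
    (transSL m φ j).freeVars ⊆ {j} := by
  induction φ with
  | up => exact hcl.elim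
  | neg φ ih => exact ih hcl
  | and φ ψ ihφ ihψ => exact Set.union_subset (ihφ hcl.1) (ihψ hcl.2)
  | op k φ =>
    rintro b ⟨-, hb⟩
    cases b <;> cases j <;> simp_all
  | _ => simp [transSL, FO2.freeVars]

/-- `𝖮ᵏ` evaluated at `x_j` freezes the class of `x_j` and moves to a position that `T_j` binds
to `x_{1-j}`, so throughout the induction the register holds the class of the other variable. -/
theorem ssat_cls_iff_fosat_transSL {m : ℕ} {φ : SLTL A} (hwf : φ.wf m) (σ : DataWord A)
    (j : Bool) (e : Bool → ℕ) (hj : (e j : ℕ∞) < σ.len) :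
    ssat m σ φ (e j) (some (σ.cls (e !j))) ↔ fosat σ (transSL m φ j) e := by
  induction φ generalizing j e with
  | atom a => rfl
  | tt => simp [ssat, transSL, fosat]
  | up => simp [ssat, transSL, fosat, DataWord.cls]
  | neg φ ih => exact not_congr (ih hwf j e hj)
  | and φ ψ ihφ ihψ => exact and_congr (ihφ hwf.1 j e hj) (ihψ hwf.2 j e hj)
  | op k φ ih =>
    have hne : j ≠ !j := by cases j <;> decide
    rw [SLTL.ssat_op_iff hj]
    simp only [transSL, fosat, fosat_chi_iff σ j hwf.1, Function.update_self,
      Function.update_of_ne hne]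
    refine exists_congr fun a => and_congr_right fun ha => and_congr_right fun _ => ?_
    have := ih hwf.2 (!j) (Function.update e (!j) a) (by simpa using ha)
    simpa [Function.update_of_ne hne] using this

/-- Simple LTL↓₁(𝒪ₘ) translates to FO²(∼, <, +1, …, +m): for every sentence `φ`, the
formula `T_j(φ)` uses only offsets ≤ m, has at most `x_j` free, and is equivalent
to `φ`. -/
theorem simpleLTL_to_FO2_correct {A : Type} (m : ℕ) (φ : SLTL A)
    (hwf : φ.wf m) (hcl : φ.closed) (j : Bool) :
    (transSL m φ j).offsetsLE m ∧
    (transSL m φ j).freeVars ⊆ {j} ∧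
    ∀ (σ : DataWord A) (i : ℕ), (i : ℕ∞) < σ.len →
      ∀ e : Bool → ℕ, e j = i →
        (ssat m σ φ i none ↔ fosat σ (transSL m φ j) e) := by
  refine ⟨transSL_offsetsLE hwf j, transSL_freeVars_subset hcl j, ?_⟩
  rintro σ _ hi e rfl
  rw [SLTL.ssat_congr_of_closed hcl _ none (some (σ.cls (e !j)))]
  exact ssat_cls_iff_fosat_transSL hwf σ j e hi
end

section
/- FO²(∼, <, +1, …, +m) over data words is no more expressive than simple LTL↓₁(𝒪_m): for every formula φ(x_j) of two-variable first-order logic over data words with predicates ∼, <, +1, …, +m, there exists an equivalent sentence of simple LTL↓₁(𝒪_m), i.e., a sentence ψ with the same alphabet such that for every data word σ and every position i, σ ⊨_{[x_j ↦ i]} φ(x_j) iff σ, i ⊨_∅ ψ. -/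
open scoped Classical

/-!
By induction on `φ`: on the pairs of positions of a fixed order type and a fixed truth value of
`x₀ ∼ x₁`, the relation defined by `φ(x₀, x₁)` is a finite union of rectangles
`ψ₀(x₀) ∧ ψ₁(x₁)` of simple sentences. Atoms depend on nothing but the order type and `∼`, and
unions of rectangles are closed under complement and intersection by distributing. A witness
`x₀` of order type `t` and similarity `b` relative to `x₁` is reached from `x₁` by
`↓₁ 𝖮⁻ᵗ (±↑₁ ∧ ψ₀)`, which turns `∃ x₀` into a disjunction of sentences at `x₁`. A formula
with `x_j` alone free is the diagonal of its relation: order type `0` with `x₀ ∼ x₁`.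
-/

/-- The order types `χₖ` of the paper, as the integers `-(m + 1) … m + 1`; together with `i ∼ j`
they decide every atom of FO²(∼, <, +1, …, +m). -/
def orderType (m i j : ℕ) : ℤ := max (-(m + 1 : ℤ)) (min (m + 1) ((j : ℤ) - i))

lemma orderType_swap (m i j : ℕ) : orderType m j i = -orderType m i j := by
  unfold orderType; omega

lemma orderType_self (m i : ℕ) : orderType m i i = 0 := by
  unfold orderType; omega

lemma natAbs_orderType_le (m i j : ℕ) : (orderType m i j).natAbs ≤ m + 1 := by
  unfold orderType; omega

noncomputable def orderTypes (m : ℕ) : List ℤ := (Finset.Icc (-(m + 1 : ℤ)) (m + 1)).toList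

lemma mem_orderTypes {m : ℕ} {t : ℤ} : t ∈ orderTypes m ↔ t.natAbs ≤ m + 1 := by
  rw [orderTypes, Finset.mem_toList, Finset.mem_Icc]; omega

lemma DataWord.sim_comm {A : Type} (σ : DataWord A) (i j : ℕ) : σ.sim j i ↔ σ.sim i j :=
  ⟨σ.sim_symm j i, σ.sim_symm i j⟩

lemma DataWord.decide_sim_comm {A : Type} (σ : DataWord A) (i j : ℕ) :
    decide (σ.sim j i) = decide (σ.sim i j) :=
  decide_eq_decide.mpr (σ.sim_comm i j)

namespace SLTL

variable {A : Type} {m : ℕ}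

def IsSentence (m : ℕ) (ψ : SLTL A) : Prop := ψ.wf m ∧ ψ.closed

lemma IsSentence.and {φ ψ : SLTL A} (hφ : IsSentence m φ) (hψ : IsSentence m ψ) :
    IsSentence m (.and φ ψ) :=
  ⟨⟨hφ.1, hψ.1⟩, hφ.2, hψ.2⟩

lemma IsSentence.neg {φ : SLTL A} (hφ : IsSentence m φ) : IsSentence m (.neg φ) := hφ

lemma isSentence_tt : IsSentence m (.tt : SLTL A) := ⟨trivial, trivial⟩

lemma isSentence_atom (a : A) : IsSentence m (.atom a) := ⟨trivial, trivial⟩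

def bigOr : List (SLTL A) → SLTL A
  | [] => .neg .tt
  | φ :: l => .neg (.and (.neg φ) (.neg (bigOr l)))

lemma ssat_bigOr (σ : DataWord A) (l : List (SLTL A)) (i : ℕ) (v : Option (Set ℕ)) :
    ssat m σ (bigOr l) i v ↔ ∃ φ ∈ l, ssat m σ φ i v := by
  induction l with
  | nil => simp [bigOr, ssat]
  | cons φ l ih => simp only [bigOr, ssat, ih, List.mem_cons, exists_eq_or_imp, not_and_or, not_not]

lemma isSentence_bigOr {l : List (SLTL A)} (h : ∀ φ ∈ l, IsSentence m φ) :
    IsSentence m (bigOr l) := by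
  induction l with
  | nil => exact isSentence_tt.neg
  | cons φ l ih =>
    exact ((h φ List.mem_cons_self).neg.and
      (ih fun ψ hψ => h ψ (List.mem_cons_of_mem _ hψ)).neg).neg

lemma closed.ssat_iff {ψ : SLTL A} (hψ : ψ.closed) (σ : DataWord A) (i : ℕ)
    (v : Option (Set ℕ)) : ssat m σ ψ i v ↔ ssat m σ ψ i none := by
  induction ψ with
  | up => exact hψ.elim
  | neg φ ih => exact not_congr (ih hψ)
  | and φ ψ ih₁ ih₂ => exact and_congr (ih₁ hψ.1) (ih₂ hψ.2)
  | _ => exact Iff.rfl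

lemma ssat_op (σ : DataWord A) {i : ℕ} (hi : (i : ℕ∞) < σ.len) {t : ℤ}
    (ht : t.natAbs ≤ m + 1) (φ : SLTL A) (v : Option (Set ℕ)) :
    ssat m σ (.op t φ) i v ↔
      ∃ j : ℕ, (j : ℕ∞) < σ.len ∧ orderType m i j = t ∧ ssat m σ φ j (some (σ.cls i)) := by
  simp only [ssat]
  split_ifs with h₁ h₂
  · exact exists_congr fun j => by unfold orderType; constructor <;> rintro ⟨h, h', h''⟩ <;>
      exact ⟨by omega, by omega, h''⟩
  · refine exists_congr fun j => ⟨fun ⟨h, h'⟩ => ⟨?_, by unfold orderType; omega, h'⟩,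
      fun ⟨_, h, h'⟩ => ⟨by unfold orderType at h; omega, h'⟩⟩
    exact lt_trans (by exact_mod_cast (show j < i by omega)) hi
  · exact exists_congr fun j => by unfold orderType; constructor <;> rintro ⟨h, h', h''⟩ <;>
      exact ⟨by omega, by omega, h''⟩

def regTest (b : Bool) : SLTL A := if b then .up else .neg .up

lemma ssat_regTest (σ : DataWord A) (b : Bool) (i j : ℕ) :
    ssat m σ (regTest b) j (some (σ.cls i)) ↔ decide (σ.sim i j) = b := by
  cases b <;> simp [regTest, ssat, DataWord.cls]

def diamond (t : ℤ) (b : Bool) (ψ : SLTL A) : SLTL A := .op t (.and (regTest b) ψ)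

lemma isSentence_diamond {t : ℤ} (ht : t.natAbs ≤ m + 1) (b : Bool) {ψ : SLTL A}
    (hψ : IsSentence m ψ) : IsSentence m (diamond t b ψ) :=
  ⟨⟨ht, by cases b <;> trivial, hψ.1⟩, trivial⟩

lemma ssat_diamond (σ : DataWord A) {i : ℕ} (hi : (i : ℕ∞) < σ.len) {t : ℤ}
    (ht : t.natAbs ≤ m + 1) (b : Bool) {ψ : SLTL A} (hψ : ψ.closed) (v : Option (Set ℕ)) :
    ssat m σ (diamond t b ψ) i v ↔ ∃ j : ℕ, (j : ℕ∞) < σ.len ∧ orderType m i j = t ∧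
      decide (σ.sim i j) = b ∧ ssat m σ ψ j none := by
  simp only [diamond, ssat_op σ hi ht, ssat, ssat_regTest, hψ.ssat_iff]

/-- `L` read as the finite union of rectangles `⋃ ψ₀ × ψ₁`. -/
def PairsHold (m : ℕ) (σ : DataWord A) (L : List (SLTL A × SLTL A)) (i j : ℕ) : Prop :=
  ∃ p ∈ L, ssat m σ p.1 i none ∧ ssat m σ p.2 j none

def PairSentences (m : ℕ) (L : List (SLTL A × SLTL A)) : Prop :=
  ∀ p ∈ L, IsSentence m p.1 ∧ IsSentence m p.2

/-- The complement of a union of rectangles, expanded again into a union of rectangles: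
`(ψ₀ × ψ₁ ∪ R)ᶜ = (¬ψ₀ × ⊤ ∩ Rᶜ) ∪ (⊤ × ¬ψ₁ ∩ Rᶜ)`. -/
def pairsCompl : List (SLTL A × SLTL A) → List (SLTL A × SLTL A)
  | [] => [(.tt, .tt)]
  | p :: L => (pairsCompl L).map (fun q => (.and (.neg p.1) q.1, q.2)) ++
      (pairsCompl L).map (fun q => (q.1, .and (.neg p.2) q.2))

lemma pairsHold_compl (σ : DataWord A) (L : List (SLTL A × SLTL A)) (i j : ℕ) :
    PairsHold m σ (pairsCompl L) i j ↔ ¬ PairsHold m σ L i j := by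
  induction L with
  | nil => simp [PairsHold, pairsCompl, ssat]
  | cons p L ih =>
    simp only [PairsHold, pairsCompl, List.mem_append, or_and_right, exists_or, List.mem_map,
      exists_exists_and_eq_and, List.exists_mem_cons_iff, ssat] at ih ⊢
    rw [not_or, ← ih]
    constructor
    · rintro (⟨q, hq, ⟨hp₁, hq₁⟩, hq₂⟩ | ⟨q, hq, hq₁, hp₂, hq₂⟩)
      · exact ⟨fun h => hp₁ h.1, q, hq, hq₁, hq₂⟩
      · exact ⟨fun h => hp₂ h.2, q, hq, hq₁, hq₂⟩
    · rintro ⟨hp, q, hq, hq₁, hq₂⟩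
      by_cases hp₁ : ssat m σ p.1 i none
      · exact Or.inr ⟨q, hq, hq₁, fun hp₂ => hp ⟨hp₁, hp₂⟩, hq₂⟩
      · exact Or.inl ⟨q, hq, ⟨hp₁, hq₁⟩, hq₂⟩

lemma pairSentences_compl {L : List (SLTL A × SLTL A)} (h : PairSentences m L) :
    PairSentences m (pairsCompl L) := by
  induction L with
  | nil => simp [PairSentences, pairsCompl, isSentence_tt]
  | cons p L ih =>
    have hp := h p List.mem_cons_self
    have hL := ih fun q hq => h q (List.mem_cons_of_mem _ hq)
    simp only [PairSentences, pairsCompl, List.mem_append, List.mem_map]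
    rintro _ (⟨q, hq, rfl⟩ | ⟨q, hq, rfl⟩)
    · exact ⟨hp.1.neg.and (hL q hq).1, (hL q hq).2⟩
    · exact ⟨(hL q hq).1, hp.2.neg.and (hL q hq).2⟩

def pairsInter (L₁ L₂ : List (SLTL A × SLTL A)) : List (SLTL A × SLTL A) :=
  L₁.flatMap fun p => L₂.map fun q => (.and p.1 q.1, .and p.2 q.2)

lemma pairsHold_inter (σ : DataWord A) (L₁ L₂ : List (SLTL A × SLTL A)) (i j : ℕ) :
    PairsHold m σ (pairsInter L₁ L₂) i j ↔ PairsHold m σ L₁ i j ∧ PairsHold m σ L₂ i j := by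
  simp only [PairsHold, pairsInter, List.mem_flatMap, List.mem_map]
  constructor
  · rintro ⟨_, ⟨p, hp, q, hq, rfl⟩, ⟨hp₁, hq₁⟩, hp₂, hq₂⟩
    exact ⟨⟨p, hp, hp₁, hp₂⟩, q, hq, hq₁, hq₂⟩
  · rintro ⟨⟨p, hp, hp₁, hp₂⟩, q, hq, hq₁, hq₂⟩
    exact ⟨_, ⟨p, hp, q, hq, rfl⟩, ⟨hp₁, hq₁⟩, hp₂, hq₂⟩

lemma pairSentences_inter {L₁ L₂ : List (SLTL A × SLTL A)} (h₁ : PairSentences m L₁)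
    (h₂ : PairSentences m L₂) : PairSentences m (pairsInter L₁ L₂) := by
  simp only [PairSentences, pairsInter, List.mem_flatMap, List.mem_map]
  rintro _ ⟨p, hp, q, hq, rfl⟩
  exact ⟨(h₁ p hp).1.and (h₂ q hq).1, (h₁ p hp).2.and (h₂ q hq).2⟩

lemma pairsHold_map_swap (σ : DataWord A) (L : List (SLTL A × SLTL A)) (i j : ℕ) :
    PairsHold m σ (L.map Prod.swap) i j ↔ PairsHold m σ L j i := by
  simp only [PairsHold, List.mem_map]
  constructor
  · rintro ⟨_, ⟨p, hp, rfl⟩, h⟩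
    exact ⟨p, hp, h.2, h.1⟩
  · rintro ⟨p, hp, h⟩
    exact ⟨_, ⟨p, hp, rfl⟩, h.2, h.1⟩

lemma pairSentences_map_swap {L : List (SLTL A × SLTL A)} (h : PairSentences m L) :
    PairSentences m (L.map Prod.swap) := by
  simp only [PairSentences, List.mem_map]
  rintro _ ⟨p, hp, rfl⟩
  exact (h p hp).symm

/-- On the pairs of positions of each order type `t` and similarity `b`, the relation is a
finite union `⋃ ψ₀ × ψ₁` of rectangles cut out by sentences. -/
def Decomposable (m : ℕ) (R : DataWord A → ℕ → ℕ → Prop) : Prop :=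
  ∃ G : ℤ → Bool → List (SLTL A × SLTL A), (∀ t b, PairSentences m (G t b)) ∧
    ∀ (σ : DataWord A) (i j : ℕ), (i : ℕ∞) < σ.len → (j : ℕ∞) < σ.len →
      (R σ i j ↔ PairsHold m σ (G (orderType m i j) (decide (σ.sim i j))) i j)

namespace Decomposable

variable {R R' : DataWord A → ℕ → ℕ → Prop}

lemma congr (h : Decomposable m R)
    (hR : ∀ (σ : DataWord A) (i j : ℕ), (i : ℕ∞) < σ.len → (j : ℕ∞) < σ.len →
      (R σ i j ↔ R' σ i j)) :
    Decomposable m R' := by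
  obtain ⟨G, hG, hRG⟩ := h
  exact ⟨G, hG, fun σ i j hi hj => (hR σ i j hi hj).symm.trans (hRG σ i j hi hj)⟩

lemma of_orderType (f : ℤ → Bool → Prop)
    (hR : ∀ (σ : DataWord A) (i j : ℕ), (i : ℕ∞) < σ.len → (j : ℕ∞) < σ.len →
      (R σ i j ↔ f (orderType m i j) (decide (σ.sim i j)))) :
    Decomposable m R := by
  refine ⟨fun t b => if f t b then [(.tt, .tt)] else [], fun t b => ?_, fun σ i j hi hj => ?_⟩
  · dsimp only
    split_ifs <;> simp [PairSentences, isSentence_tt]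
  · dsimp only
    rw [hR σ i j hi hj]
    split_ifs with h <;> simp [PairsHold, ssat, h]

lemma of_sentence_left {ψ : SLTL A} (hψ : IsSentence m ψ) :
    Decomposable m fun σ i _ => ssat m σ ψ i none :=
  ⟨fun _ _ => [(ψ, .tt)], fun _ _ => by simp [PairSentences, hψ, isSentence_tt],
    fun σ i j _ _ => by simp [PairsHold, ssat]⟩

lemma not (h : Decomposable m R) : Decomposable m fun σ i j => ¬ R σ i j := by
  obtain ⟨G, hG, hRG⟩ := h
  exact ⟨fun t b => pairsCompl (G t b), fun t b => pairSentences_compl (hG t b),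
    fun σ i j hi hj => by dsimp only; rw [pairsHold_compl, hRG σ i j hi hj]⟩

lemma and (h : Decomposable m R) (h' : Decomposable m R') :
    Decomposable m fun σ i j => R σ i j ∧ R' σ i j := by
  obtain ⟨G, hG, hRG⟩ := h
  obtain ⟨G', hG', hRG'⟩ := h'
  exact ⟨fun t b => pairsInter (G t b) (G' t b),
    fun t b => pairSentences_inter (hG t b) (hG' t b),
    fun σ i j hi hj => by dsimp only; rw [pairsHold_inter, hRG σ i j hi hj, hRG' σ i j hi hj]⟩

lemma swap (h : Decomposable m R) : Decomposable m fun σ i j => R σ j i := by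
  obtain ⟨G, hG, hRG⟩ := h
  refine ⟨fun t b => (G (-t) b).map Prod.swap, fun t b => pairSentences_map_swap (hG (-t) b),
    fun σ i j hi hj => ?_⟩
  dsimp only
  rw [hRG σ j i hj hi, pairsHold_map_swap, orderType_swap, σ.decide_sim_comm]

lemma of_sentence_right {ψ : SLTL A} (hψ : IsSentence m ψ) :
    Decomposable m fun σ _ j => ssat m σ ψ j none :=
  (of_sentence_left hψ).swap

lemma exists_left (h : Decomposable m R) :
    Decomposable m fun σ _ j => ∃ k : ℕ, (k : ℕ∞) < σ.len ∧ R σ k j := by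
  obtain ⟨G, hG, hRG⟩ := h
  let Φ : List (SLTL A) := (orderTypes m).flatMap fun t => [false, true].flatMap fun b =>
    (G t b).map fun p => .and p.2 (diamond (-t) b p.1)
  have hΦ : ∀ φ ∈ Φ, IsSentence m φ := by
    simp only [Φ, List.mem_flatMap, List.mem_map]
    rintro _ ⟨t, ht, b, -, p, hp, rfl⟩
    exact (hG t b p hp).2.and
      (isSentence_diamond (by simpa using mem_orderTypes.mp ht) b (hG t b p hp).1)
  refine (of_sentence_right (isSentence_bigOr hΦ)).congr fun σ _ j _ hj => ?_
  rw [ssat_bigOr, iff_comm]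
  constructor
  · rintro ⟨k, hk, hRk⟩
    obtain ⟨p, hp, hp₁, hp₂⟩ := (hRG σ k j hk hj).mp hRk
    have ht := natAbs_orderType_le m k j
    refine ⟨.and p.2 (diamond (-orderType m k j) (decide (σ.sim k j)) p.1), ?_, hp₂, ?_⟩
    · simp only [Φ, List.mem_flatMap, List.mem_map]
      exact ⟨_, mem_orderTypes.mpr ht, _, by simp [em'], p, hp, rfl⟩
    · rw [ssat_diamond σ hj (by simpa using ht) _ (hG _ _ p hp).1.2]
      exact ⟨k, hk, orderType_swap m k j, σ.decide_sim_comm k j, hp₁⟩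
  · rintro ⟨φ, hφΦ, hφ⟩
    simp only [Φ, List.mem_flatMap, List.mem_map] at hφΦ
    obtain ⟨t, ht, b, -, p, hp, rfl⟩ := hφΦ
    obtain ⟨hp₂, hd⟩ := hφ
    rw [ssat_diamond σ hj (by simpa using mem_orderTypes.mp ht) _ (hG t b p hp).1.2] at hd
    obtain ⟨k, hk, hkt, hkb, hp₁⟩ := hd
    rw [orderType_swap, neg_inj] at hkt
    rw [σ.decide_sim_comm] at hkb
    subst hkt hkb
    exact ⟨k, hk, (hRG σ k j hk hj).mpr ⟨p, hp, hp₁, hp₂⟩⟩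

lemma exists_right (h : Decomposable m R) :
    Decomposable m fun σ i _ => ∃ k : ℕ, (k : ℕ∞) < σ.len ∧ R σ i k :=
  h.swap.exists_left.swap

lemma exists_sentence_diag (h : Decomposable m R) :
    ∃ ψ : SLTL A, IsSentence m ψ ∧
      ∀ (σ : DataWord A) (i : ℕ), (i : ℕ∞) < σ.len → (R σ i i ↔ ssat m σ ψ i none) := by
  obtain ⟨G, hG, hRG⟩ := h
  refine ⟨bigOr ((G 0 true).map fun p => .and p.1 p.2), isSentence_bigOr ?_, fun σ i hi => ?_⟩
  · simp only [List.mem_map]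
    rintro _ ⟨p, hp, rfl⟩
    exact (hG 0 true p hp).1.and (hG 0 true p hp).2
  · rw [hRG σ i i hi hi, orderType_self, decide_eq_true (σ.sim_refl i hi), ssat_bigOr]
    simp [PairsHold, ssat]

end Decomposable

end SLTL

namespace FO2

variable {A : Type}

/-- The assignment `x₀ ↦ i`, `x₁ ↦ j`, where `x₀, x₁` are `false, true`. -/
def assign (i j : ℕ) : Bool → ℕ := fun x => bif x then j else i

lemma update_assign_false (i j k : ℕ) : Function.update (assign i j) false k = assign k j := by
  funext x; cases x <;> simp [assign]

lemma update_assign_true (i j k : ℕ) : Function.update (assign i j) true k = assign i k := by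
  funext x; cases x <;> simp [assign]

lemma fosat_congr (σ : DataWord A) (φ : FO2 A) {e e' : Bool → ℕ}
    (h : ∀ x ∈ φ.freeVars, e x = e' x) : fosat σ φ e ↔ fosat σ φ e' := by
  induction φ generalizing e e' with
  | pa a x => simp [fosat, h x (by simp [freeVars])]
  | sim x y => simp [fosat, h x (by simp [freeVars]), h y (by simp [freeVars])]
  | lt x y => simp [fosat, h x (by simp [freeVars]), h y (by simp [freeVars])]
  | plus x y k => simp [fosat, h x (by simp [freeVars]), h y (by simp [freeVars])]
  | neg φ ih => exact not_congr (ih h)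
  | and φ ψ ih₁ ih₂ =>
    exact and_congr (ih₁ fun x hx => h x (Or.inl hx)) (ih₂ fun x hx => h x (Or.inr hx))
  | ex x φ ih =>
    refine exists_congr fun i => and_congr_right fun _ => ih fun y hy => ?_
    by_cases hyx : y = x
    · subst hyx; simp
    · simp [Function.update_of_ne hyx, h y ⟨hy, hyx⟩]

theorem decomposable_fosat {m : ℕ} (φ : FO2 A) (hφ : φ.offsetsLE m) :
    SLTL.Decomposable m fun σ i j => fosat σ φ (assign i j) := by
  induction φ with
  | pa a x =>
    cases x
    · exact SLTL.Decomposable.of_sentence_left (SLTL.isSentence_atom a)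
    · exact SLTL.Decomposable.of_sentence_right (SLTL.isSentence_atom a)
  | sim x y =>
    refine .of_orderType (fun _ b => x = y ∨ b = true) fun σ i j hi hj => ?_
    cases x <;> cases y <;> simp [fosat, assign, σ.sim_refl i hi, σ.sim_refl j hj, σ.sim_comm]
  | lt x y =>
    refine .of_orderType
      (fun t _ => (x = false ∧ y = true ∧ 0 < t) ∨ (x = true ∧ y = false ∧ t < 0))
      fun σ i j _ _ => ?_
    cases x <;> cases y <;> simp [fosat, assign, orderType]
    omega
  | plus x y k =>
    obtain ⟨hk, hkm⟩ : 1 ≤ k ∧ k ≤ m := hφ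
    refine .of_orderType
      (fun t _ => (x = false ∧ y = true ∧ t = -k) ∨ (x = true ∧ y = false ∧ t = k))
      fun σ i j _ _ => ?_
    cases x <;> cases y <;> simp [fosat, assign, orderType] <;> omega
  | neg φ ih => exact (ih hφ).not
  | and φ ψ ih₁ ih₂ => exact (ih₁ hφ.1).and (ih₂ hφ.2)
  | ex x φ ih =>
    cases x
    · simpa only [fosat, update_assign_false] using (ih hφ).exists_left
    · simpa only [fosat, update_assign_true] using (ih hφ).exists_right

end FO2

/-- FO²(∼, <, +1, …, +m) is no more expressive than simple LTL↓₁(𝒪ₘ): every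
two-variable formula with at most `x_j` free is equivalent to a sentence of simple
LTL↓₁(𝒪ₘ) over the same alphabet. -/
theorem FO2_to_simpleLTL {A : Type} (m : ℕ) (φ : FO2 A)
    (hoff : φ.offsetsLE m) (j : Bool) (hfree : φ.freeVars ⊆ {j}) :
    ∃ ψ : SLTL A, ψ.wf m ∧ ψ.closed ∧
      ∀ (σ : DataWord A) (e : Bool → ℕ), ((e j : ℕ) : ℕ∞) < σ.len →
        (fosat σ φ e ↔ ssat m σ ψ (e j) none) := by
  obtain ⟨ψ, ⟨hwf, hclosed⟩, hψ⟩ := (FO2.decomposable_fosat φ hoff).exists_sentence_diag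
  refine ⟨ψ, hwf, hclosed, fun σ e he => ?_⟩
  rw [← hψ σ (e j) he]
  refine FO2.fosat_congr σ φ fun x hx => ?_
  rw [Set.mem_singleton_iff.mp (hfree hx)]
  exact (Bool.cond_self j (e j)).symm
end

section
/- Big-step acceptance characterization for 1ARA₁ over finite data words: for every finite data word σ over Σ, the automaton A accepts σ iff there exists a finite sequence P₁, …, P_{k−1} of sets of states of A for σ such that {(0, q_I, ∅)} ⇒ P₁ ⇒ ⋯ ⇒ P_{k−1} ⇒ ∅. -/
open scoped Classical

/-- Tests: current letter, first position, last position, register equality. -/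
inductive TestF (A : Type) where
  | letter (a : A)
  | beg
  | last
  | reg (r : ℕ)

/-- Transition formulae of register automata. -/
inductive TransF (A Q : Type) where
  | ite (β : TestF A) (q₁ q₂ : Q)
  | store (r : ℕ) (q : Q)
  | conj (q₁ q₂ : Q)
  | disj (q₁ q₂ : Q)
  | top
  | bot
  | fwd (q : Q)
  | fwdBar (q : Q)
  | bwd (q : Q)
  | bwdBar (q : Q)

namespace TransF

def locs {A Q : Type} : TransF A Q → List Q
  | .ite _ q₁ q₂ | .conj q₁ q₂ | .disj q₁ q₂ => [q₁, q₂]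
  | .store _ q | .fwd q | .fwdBar q | .bwd q | .bwdBar q => [q]
  | .top | .bot => []

/-- Transitions which do not move to another word position. -/
def isLocal {A Q : Type} : TransF A Q → Prop
  | .ite _ _ _ => True
  | .store _ _ => True
  | .conj _ _ => True
  | .disj _ _ => True
  | _ => False

def regs {A Q : Type} : TransF A Q → List ℕ
  | .ite (.reg r) _ _ => [r]
  | .store r _ => [r]
  | _ => []

end TransF

/-- A (two-way alternating) register automaton with `n` registers: ranks are
non-increasing along transitions and heights strictly decrease along local transitions. -/
structure RA (A : Type) where
  Q : Type
  qI : Q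
  n : ℕ
  δ : Q → TransF A Q
  rank : Q → ℕ
  height : Q → ℕ
  rank_le : ∀ q q', q' ∈ (δ q).locs → rank q' ≤ rank q
  height_lt : ∀ q q', (δ q).isLocal → q' ∈ (δ q).locs → height q' < height q
  regs_lt : ∀ q r, r ∈ (δ q).regs → r < n

/-- One-way: no backward moves and no begin-tests. -/
def RA.OneWay {A : Type} (M : RA A) : Prop :=
  ∀ q, match M.δ q with
    | .bwd _ => False
    | .bwdBar _ => False
    | .ite .beg _ _ => False
    | _ => True

/-- Nondeterministic: no conjunctive branching. -/
def RA.Nondet {A : Type} (M : RA A) : Prop :=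
  ∀ q, match M.δ q with
    | .conj _ _ => False
    | _ => True

/-- Universal: no disjunctive branching. -/
def RA.Universal {A : Type} (M : RA A) : Prop :=
  ∀ q, match M.δ q with
    | .disj _ _ => False
    | _ => True

/-- Partial register valuations, mapping registers to classes of the data word. -/
abbrev RegVal : Type := ℕ → Option (Set ℕ)

/-- States of the acceptance game: word position, location, register valuation. -/
abbrev RAState {A : Type} (M : RA A) : Type := ℕ × M.Q × RegVal

def testHolds {A : Type} (σ : DataWord A) (i : ℕ) (v : RegVal) : TestF A → Prop
  | .letter a => σ.letter i = a
  | .beg => i = 0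
  | .last => (i : ℕ∞) + 1 = σ.len
  | .reg r => ∃ C, v r = some C ∧ i ∈ C

/-- The successor relation of the acceptance game of `M` over `σ`. -/
def raSucc {A : Type} (M : RA A) (σ : DataWord A) (s s' : RAState M) : Prop :=
  match M.δ s.2.1 with
  | .ite β q₁ q₂ =>
      (testHolds σ s.1 s.2.2 β ∧ s' = (s.1, q₁, s.2.2)) ∨
      (¬ testHolds σ s.1 s.2.2 β ∧ s' = (s.1, q₂, s.2.2))
  | .store r q₁ => s' = (s.1, q₁, Function.update s.2.2 r (some (σ.cls s.1)))
  | .conj q₁ q₂ => s' = (s.1, q₁, s.2.2) ∨ s' = (s.1, q₂, s.2.2)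
  | .disj q₁ q₂ => s' = (s.1, q₁, s.2.2) ∨ s' = (s.1, q₂, s.2.2)
  | .top => False
  | .bot => False
  | .fwd q₁ => (s.1 : ℕ∞) + 1 < σ.len ∧ s' = (s.1 + 1, q₁, s.2.2)
  | .fwdBar q₁ => (s.1 : ℕ∞) + 1 < σ.len ∧ s' = (s.1 + 1, q₁, s.2.2)
  | .bwd q₁ => 0 < s.1 ∧ s' = (s.1 - 1, q₁, s.2.2)
  | .bwdBar q₁ => 0 < s.1 ∧ s' = (s.1 - 1, q₁, s.2.2)

/-- Positions of player 1 (the automaton) in the acceptance game: disjunctions,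
rejecting states, and blocked moves `X` (at the last position) / `X⁻¹` (at the first). -/
def raOwn1 {A : Type} (M : RA A) (σ : DataWord A) (s : RAState M) : Prop :=
  match M.δ s.2.1 with
  | .disj _ _ => True
  | .bot => True
  | .fwd _ => ¬ ((s.1 : ℕ∞) + 1 < σ.len)
  | .bwd _ => s.1 = 0
  | _ => False

/-- The acceptance game of `M` over `σ` (a weak game). -/
def raGame {A : Type} (M : RA A) (σ : DataWord A) : Game (RAState M) :=
  { succ := raSucc M σ, own1 := raOwn1 M σ, rank := fun s => M.rank s.2.1 }

def initState {A : Type} (M : RA A) : RAState M := (0, M.qI, fun _ => none)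

/-- `M` accepts `σ` iff player 1 has a winning strategy from the initial state. -/
def Accepts {A : Type} (M : RA A) (σ : DataWord A) : Prop :=
  ∃ τ : Set (List (RAState M)), (raGame M σ).IsWinningStrategy true (initState M) τ

/-- A finite play that contains no move to another word position. -/
def NoMove {A : Type} {M : RA A} (π : List (RAState M)) : Prop :=
  π.Chain' (fun s s' => s.1 = s'.1)

/-- `bigTo M σ p P'`: player 1 has a strategy from `p` in the acceptance game such that
every complete play following it which contains no move to another word position is
winning for player 1, and `P'` is the set of all targets of first moves to another word
position in plays of the strategy. -/
def bigTo {A : Type} (M : RA A) (σ : DataWord A) (p : RAState M)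
    (P' : Set (RAState M)) : Prop :=
  ∃ τ : Set (List (RAState M)),
    (raGame M σ).IsStrategy true p τ ∧
    (∀ π ∈ τ, NoMove π → ∀ q, π.getLast? = some q →
      (raGame M σ).Terminal q → ¬ (raGame M σ).Owns true q) ∧
    (∀ f : ℕ → RAState M, prefixIn τ f → (∀ i, (f i).1 = (f 0).1) →
      (raGame M σ).InfWin true f) ∧
    P' = {s' | ∃ π ∈ τ, NoMove π ∧ ∃ s : RAState M, π.getLast? = some s ∧
      raSucc M σ s s' ∧ s.1 ≠ s'.1 ∧ π ++ [s'] ∈ τ}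

/-- The big-step successor relation on sets of states. -/
def setBigTo {A : Type} (M : RA A) (σ : DataWord A) (P P' : Set (RAState M)) : Prop :=
  P.Nonempty ∧ ∃ f : RAState M → Set (RAState M),
    (∀ p ∈ P, bigTo M σ p (f p)) ∧ P' = ⋃ p ∈ P, f p


/-! A one-way automaton cannot make infinitely many moves on a finite word: forward moves
approach the end of the word and local moves decrease the height. The acceptance game is
therefore well founded, so player 1 wins exactly on the attractor `Game.Wins`, which is realised
by a positional strategy. A big step `p ⇒ P'` is a strategy cut at the first move to another
position. It shows `p` winning as soon as every state of `P'` is; conversely the winning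
positional strategy cuts into a big step whose targets are winning and lie one position
further. Iterating from the initial state, the sets of states run off the end of the word. -/

namespace Game

variable {S : Type} {G : Game S} {p q : S}

/-- Player 1's attractor to the positions where player 2 is stuck, as a least fixed point. -/
inductive Wins (G : Game S) : S → Prop
  | move {p q : S} : G.own1 p → G.succ p q → G.Wins q → G.Wins p
  | forall_move {p : S} : ¬ G.own1 p → (∀ q, G.succ p q → G.Wins q) → G.Wins p

theorem Wins.not_own1_of_terminal (hp : G.Wins p) (ht : G.Terminal p) : ¬ G.own1 p := by
  cases hp with
  | move _ hpq _ => exact absurd hpq (ht _)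
  | forall_move h _ => exact h

noncomputable def winMove (G : Game S) (p : S) : S :=
  if h : ∃ q, G.succ p q ∧ G.Wins q then h.choose else p

theorem Wins.winMove_spec (hp : G.Wins p) (h1 : G.own1 p) :
    G.succ p (G.winMove p) ∧ G.Wins (G.winMove p) := by
  have h : ∃ q, G.succ p q ∧ G.Wins q := by
    cases hp with
    | move _ hpq hq => exact ⟨_, hpq, hq⟩
    | forall_move h2 _ => exact absurd h1 h2
  rw [winMove, dif_pos h]
  exact h.choose_spec

def WinStep (G : Game S) (s s' : S) : Prop := G.succ s s' ∧ (G.own1 s → s' = G.winMove s)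

theorem Wins.of_winStep {s s' : S} (hs : G.Wins s) (h : G.WinStep s s') : G.Wins s' := by
  by_cases h1 : G.own1 s
  · exact h.2 h1 ▸ (hs.winMove_spec h1).2
  · cases hs with
    | move h1' _ _ => exact absurd h1' h1
    | forall_move _ hall => exact hall _ h.1

def winStrategy (G : Game S) (p : S) : Set (List S) :=
  {π | π.head? = some p ∧ π.IsChain G.WinStep}

theorem wins_of_mem_winStrategy {π : List S} (hp : G.Wins p) (hπ : π ∈ G.winStrategy p)
    (hq : π.getLast? = some q) : G.Wins q := by
  refine List.IsChain.induction G.Wins π hπ.2 (fun _ _ h hs => hs.of_winStep h) (fun hne => ?_)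
    q (List.mem_of_getLast? hq)
  rwa [Option.some_inj.mp ((List.head?_eq_some_head hne).symm.trans hπ.1)]

theorem append_mem_winStrategy_iff {π : List S} {s s' : S} (hπ : π ∈ G.winStrategy p)
    (hs : π.getLast? = some s) : π ++ [s'] ∈ G.winStrategy p ↔ G.WinStep s s' := by
  have hne : π ≠ [] := by rintro rfl; simp at hs
  simp [winStrategy, List.head?_append_of_ne_nil _ hne, hπ.1, List.isChain_append, hπ.2, hs]

theorem isStrategy_winStrategy (hp : G.Wins p) : G.IsStrategy true p (G.winStrategy p) := by
  refine ⟨⟨rfl, List.isChain_singleton p⟩, fun π hπ => ?plays, fun π hπ hne => ?dropLast,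
    fun π hπ q hq h1 _ => ?move1, fun π hπ q hq h1 q' hqq' => ?move2⟩
  case plays =>
    refine ⟨⟨?_, hπ.2.imp fun _ _ h => h.1⟩, hπ.1⟩
    rintro rfl
    simp [winStrategy] at hπ
  case dropLast =>
    have hlen : 1 < π.length := by
      rcases π with _ | ⟨a, _ | ⟨b, t⟩⟩ <;> simp_all [winStrategy]
    exact ⟨by rw [List.head?_dropLast, if_pos hlen, hπ.1], hπ.2.dropLast⟩
  case move1 =>
    obtain ⟨hmove, -⟩ := (wins_of_mem_winStrategy hp hπ hq).winMove_spec h1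
    refine ⟨G.winMove q, ⟨hmove, (append_mem_winStrategy_iff hπ hq).2 ⟨hmove, fun _ => rfl⟩⟩, ?_⟩
    exact fun q' hq' => ((append_mem_winStrategy_iff hπ hq).1 hq'.2).2 h1
  case move2 => exact (append_mem_winStrategy_iff hπ hq).2 ⟨hqq', fun h => absurd h h1⟩

theorem not_prefixIn_of_wellFounded (hwf : WellFounded fun q p => G.succ p q)
    {τ : Set (List S)} (hτ : ∀ π ∈ τ, G.IsPlay π) (f : ℕ → S) : ¬ prefixIn τ f := by
  intro hf
  have hsucc : ∀ n, G.succ (f n) (f (n + 1)) := fun n => by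
    have h := (hτ _ (hf (n + 1))).2
    rw [List.Chain', List.isChain_iff_getElem] at h
    have h' := h n (by simp)
    rwa [List.getElem_ofFn, List.getElem_ofFn] at h'
  have : IsWellFounded S fun q p => G.succ p q := ⟨hwf⟩
  obtain ⟨n, hn⟩ := WellFounded.not_rel_apply_succ (r := fun q p => G.succ p q) f
  exact hn (hsucc n)

theorem isWinningStrategy_winStrategy (hwf : WellFounded fun q p => G.succ p q)
    (hp : G.Wins p) : G.IsWinningStrategy true p (G.winStrategy p) :=
  ⟨isStrategy_winStrategy hp,
    fun _ hπ _ hq ht => (wins_of_mem_winStrategy hp hπ hq).not_own1_of_terminal ht,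
    fun f hf => absurd hf <| not_prefixIn_of_wellFounded hwf
      (fun π hπ => ((isStrategy_winStrategy hp).2.1 π hπ).1) f⟩

/-- `R` marks the moves that stay inside a big step; with `R = ⊤` this is the converse of
`isWinningStrategy_winStrategy`. -/
theorem wins_of_isStrategy (hwf : WellFounded fun q p => G.succ p q) (R : S → S → Prop)
    {τ : Set (List S)} (hτ : G.IsStrategy true p τ)
    (hterm : ∀ π ∈ τ, π.IsChain R → ∀ q, π.getLast? = some q → G.Terminal q →
      ¬ G.Owns true q)
    (hexit : ∀ π ∈ τ, π.IsChain R → ∀ s s', π.getLast? = some s → G.succ s s' → ¬ R s s' →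
      π ++ [s'] ∈ τ → G.Wins s') :
    G.Wins p := by
  obtain ⟨hinit, -, -, hmove1, hmove2⟩ := hτ
  suffices ∀ q, ∀ π ∈ τ, π.IsChain R → π.getLast? = some q → G.Wins q from
    this p [p] hinit (List.isChain_singleton p) rfl
  intro q
  induction q using hwf.induction with
  | _ q ih =>
  intro π hπ hR hq
  have hnext : ∀ q', G.succ q q' → π ++ [q'] ∈ τ → G.Wins q' := by
    intro q' hqq' hmem
    by_cases hRq : R q q'
    · refine ih q' hqq' _ hmem ?_ (by simp)
      exact List.isChain_append.2 ⟨hR, List.isChain_singleton _, by simp [hq, hRq]⟩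
    · exact hexit π hπ hR q q' hq hqq' hRq hmem
  by_cases h1 : G.own1 q
  · have hmovable : ∃ q', G.succ q q' := not_forall_not.1 fun ht => hterm π hπ hR q hq ht h1
    obtain ⟨q', ⟨hqq', hmem⟩, -⟩ := hmove1 π hπ q hq h1 hmovable
    exact .move h1 hqq' (hnext q' hqq' hmem)
  · exact .forall_move h1 fun q' hqq' => hnext q' hqq' (hmove2 π hπ q hq h1 q' hqq')

theorem exists_isWinningStrategy_iff_wins (hwf : WellFounded fun q p => G.succ p q) :
    (∃ τ, G.IsWinningStrategy true p τ) ↔ G.Wins p :=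
  ⟨fun ⟨_, hτ, hterm, _⟩ => wins_of_isStrategy hwf (fun _ _ => True) hτ
      (fun π hπ _ => hterm π hπ) (fun _ _ _ _ _ _ _ hR => absurd trivial hR),
    fun hp => ⟨_, isWinningStrategy_winStrategy hwf hp⟩⟩

end Game

theorem Set.exists_first_eq_empty {α : Type*} {Ps : ℕ → Set α} (h0 : (Ps 0).Nonempty) {N : ℕ}
    (hN : Ps N = ∅) : ∃ k, 1 ≤ k ∧ Ps k = ∅ ∧ ∀ i < k, (Ps i).Nonempty := by
  have hex : ∃ k, Ps k = ∅ := ⟨N, hN⟩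
  refine ⟨Nat.find hex, ?_, Nat.find_spec hex,
    fun i hi => Set.nonempty_iff_ne_empty.2 (Nat.find_min _ hi)⟩
  rw [Nat.one_le_iff_ne_zero, Ne, Nat.find_eq_zero]
  exact h0.ne_empty

section RegisterAutomaton

variable {A : Type} {M : RA A} {σ : DataWord A}

theorem raSucc_cases (hw : M.OneWay) {s s' : RAState M} (h : raSucc M σ s s') :
    (s'.1 = s.1 ∧ M.height s'.2.1 < M.height s.2.1) ∨
      (s'.1 = s.1 + 1 ∧ (s'.1 : ℕ∞) < σ.len) := by
  have hq := hw s.2.1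
  have hh := M.height_lt s.2.1
  unfold raSucc at h
  split at h <;> simp_all [TransF.isLocal, TransF.locs] <;> aesop

theorem wellFounded_raSucc (hw : M.OneWay) (hσ : σ.IsFinite) :
    WellFounded fun s' s => (raGame M σ).succ s s' := by
  obtain ⟨N, hN⟩ := ENat.ne_top_iff_exists.1 hσ
  refine Subrelation.wf (fun {s' s} h => ?_) <| InvImage.wf
    (fun s : RAState M => (N - s.1, M.height s.2.1)) (wellFounded_lt.prod_lex wellFounded_lt)
  rcases raSucc_cases hw h with ⟨hpos, hheight⟩ | ⟨hpos, hlt⟩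
  · change Prod.Lex _ _ (N - s'.1, _) (N - s.1, _)
    rw [hpos]
    exact Prod.Lex.right _ hheight
  · rw [← hN, Nat.cast_lt] at hlt
    exact Prod.Lex.left _ _ (by omega)

theorem NoMove.fst_eq_of_head_of_getLast {π : List (RAState M)} {p s : RAState M}
    (h : NoMove π) (hp : π.head? = some p) (hs : π.getLast? = some s) : s.1 = p.1 := by
  refine List.IsChain.induction (fun x => x.1 = p.1) π h (fun _ _ hxy hx => hxy ▸ hx)
    (fun hne => ?_) s (List.mem_of_getLast? hs)
  rw [Option.some_inj.mp ((List.head?_eq_some_head hne).symm.trans hp)]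

theorem exists_bigTo_of_wins (hw : M.OneWay) (hσ : σ.IsFinite) {p : RAState M}
    (hp : (raGame M σ).Wins p) :
    ∃ P', bigTo M σ p P' ∧
      ∀ p' ∈ P', (raGame M σ).Wins p' ∧ p'.1 = p.1 + 1 ∧ (p'.1 : ℕ∞) < σ.len := by
  have hwin := Game.isWinningStrategy_winStrategy (wellFounded_raSucc hw hσ) hp
  refine ⟨_, ⟨_, hwin.1, fun π hπ _ => hwin.2.1 π hπ, fun f hf _ => hwin.2.2 f hf, rfl⟩, ?_⟩
  rintro p' ⟨π, hπ, hnm, s, hs, hss', hne, hext⟩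
  refine ⟨Game.wins_of_mem_winStrategy hp hext (by simp), ?_⟩
  rcases raSucc_cases hw hss' with ⟨hpos, -⟩ | hforward
  · exact absurd hpos.symm hne
  · rwa [hnm.fst_eq_of_head_of_getLast hπ.1 hs] at hforward

theorem wins_of_bigTo (hw : M.OneWay) (hσ : σ.IsFinite) {p : RAState M}
    {P' : Set (RAState M)} (hb : bigTo M σ p P') (hP' : ∀ p' ∈ P', (raGame M σ).Wins p') :
    (raGame M σ).Wins p := by
  obtain ⟨τ, hτ, hterm, -, rfl⟩ := hb
  exact Game.wins_of_isStrategy (wellFounded_raSucc hw hσ) (fun s s' => s.1 = s'.1) hτ hterm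
    fun π hπ hnm s s' hs hss' hne hext => hP' s' ⟨π, hπ, hnm, s, hs, hss', hne, hext⟩

theorem exists_setBigTo_chain_of_wins (hw : M.OneWay) (hσ : σ.IsFinite)
    (hinit : (raGame M σ).Wins (initState M)) :
    ∃ (k : ℕ) (Ps : ℕ → Set (RAState M)), 1 ≤ k ∧ Ps 0 = {initState M} ∧ Ps k = ∅ ∧
      ∀ i, i < k → setBigTo M σ (Ps i) (Ps (i + 1)) := by
  choose! next hnext using fun p (hp : (raGame M σ).Wins p) => exists_bigTo_of_wins hw hσ hp
  let Ps : ℕ → Set (RAState M) := fun i => Nat.rec {initState M} (fun _ P => ⋃ p ∈ P, next p) i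
  have hPs : ∀ i, ∀ p ∈ Ps i, (raGame M σ).Wins p ∧ p.1 = i ∧ (p.1 : ℕ∞) < σ.len := by
    intro i
    induction i with
    | zero => rintro p rfl; exact ⟨hinit, rfl, σ.len_pos⟩
    | succ i ih =>
      intro p' hp'
      obtain ⟨p, hp, hp'⟩ := Set.mem_iUnion₂.1 hp'
      obtain ⟨hwins, hpos, hlt⟩ := (hnext p (ih p hp).1).2 p' hp'
      exact ⟨hwins, by rw [hpos, (ih p hp).2.1], hlt⟩
  obtain ⟨N, hN⟩ := ENat.ne_top_iff_exists.1 hσ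
  have hPsN : Ps N = ∅ := Set.eq_empty_of_forall_notMem fun p hp => by
    obtain ⟨-, hpos, hlt⟩ := hPs N p hp
    rw [hpos, ← hN] at hlt
    exact lt_irrefl _ hlt
  obtain ⟨k, hk1, hk, hne⟩ := Set.exists_first_eq_empty (Ps := Ps) ⟨_, rfl⟩ hPsN
  exact ⟨k, Ps, hk1, rfl, hk, fun i hi =>
    ⟨hne i hi, next, fun p hp => (hnext p (hPs i p hp).1).1, rfl⟩⟩

theorem wins_of_setBigTo (hw : M.OneWay) (hσ : σ.IsFinite) {P P' : Set (RAState M)}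
    (h : setBigTo M σ P P') (hP' : ∀ p' ∈ P', (raGame M σ).Wins p') :
    ∀ p ∈ P, (raGame M σ).Wins p := by
  obtain ⟨-, f, hf, rfl⟩ := h
  exact fun p hp => wins_of_bigTo hw hσ (hf p hp) fun p' hp' => hP' p' (Set.mem_biUnion hp hp')

end RegisterAutomaton

theorem oneWayARA1_finitary_bigstep_characterization_general {A : Type} (M : RA A)
    (hw : M.OneWay) (σ : DataWord A) (hσ : σ.IsFinite) :
    Accepts M σ ↔
      ∃ (k : ℕ) (Ps : ℕ → Set (RAState M)), 1 ≤ k ∧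
        Ps 0 = {initState M} ∧ Ps k = ∅ ∧
        ∀ i, i < k → setBigTo M σ (Ps i) (Ps (i + 1)) := by
  rw [Accepts, Game.exists_isWinningStrategy_iff_wins (wellFounded_raSucc hw hσ)]
  refine ⟨exists_setBigTo_chain_of_wins hw hσ, ?_⟩
  rintro ⟨k, Ps, -, h0, hk, hstep⟩
  have hwins : ∀ i ≤ k, ∀ p ∈ Ps i, (raGame M σ).Wins p := by
    intro i hi
    induction hi using Nat.decreasingInduction with
    | self => simp [hk]
    | of_succ i hi ih => exact wins_of_setBigTo hw hσ (hstep i hi) ih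
  exact hwins 0 (Nat.zero_le k) _ (h0 ▸ rfl)

/-- Big-step acceptance characterization for one-way alternating register automata with
1 register over finite data words: `M` accepts `σ` iff
`{(0, q_I, ∅)} ⇒ P₁ ⇒ ⋯ ⇒ P_{k-1} ⇒ ∅`. -/
theorem oneWayARA1_finitary_bigstep_characterization {A : Type} (M : RA A)
    (hw : M.OneWay) (hn : M.n = 1) (σ : DataWord A) (hσ : σ.IsFinite) :
    Accepts M σ ↔
      ∃ (k : ℕ) (Ps : ℕ → Set (RAState M)), 1 ≤ k ∧
        Ps 0 = {initState M} ∧ Ps k = ∅ ∧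
        ∀ i, i < k → setBigTo M σ (Ps i) (Ps (i + 1)) :=
  oneWayARA1_finitary_bigstep_characterization_general M hw σ hσ
end
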